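/- arXiv:2011.00197 — 6 statements merged into one kernel-verified Lean document; each statement's English description precedes it below -/
import Mathlib

section
/- Let S be a stabilizer group on n qubits. Let Γ be the union, over all elements ±E(a,b) ∈ S, of supp(a) (the supports of the X-components of stabilizers), and let G be the simple graph on vertex set Γ in which distinct vertices i and j are adjacent if and only if ε′E(0, e_i + e_j) ∈ S for some sign ε′ ∈ {±1}. Let Γ₁, …, Γ_t be the connected components of G and N_k = |Γ_k|. Let y ∈ F₂ⁿ be any vector such that every pure-Z element ε_v E(0,v) ∈ S has sign ε_v = (−1)^{y·v} (such a y exists). Then the transversal π/2^l Z-rotation exp(i(π/2^l)Z)^{⊗n} preserves the code space V(S) for every integer l ≥ 2 if and only if for every element ±E(a,b) ∈ S with a ≠ 0: (1) supp(a) equals the (disjoint) union of those connected components Γ_k with Γ_k ⊆ supp(a); and (2) for every k with Γ_k ⊆ supp(a), N_k is even and w_H(y|_{Γ_k}) = N_k/2. -/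
open Matrix Finset

/-- The Pauli matrix `D(a,b) = X^{a₁}Z^{b₁} ⊗ ⋯ ⊗ X^{aₙ}Z^{bₙ}`, acting on `ℂ^{2ⁿ}` with the
standard basis indexed by `F₂ⁿ`: `D(a,b)|v⟩ = (−1)^{b·v} |v + a⟩`. -/
noncomputable def PauliD (n : ℕ) (a b : Fin n → ZMod 2) :
    Matrix (Fin n → ZMod 2) (Fin n → ZMod 2) ℂ := fun u v =>
  (if u = v + a then (1 : ℂ) else 0) * (-1 : ℂ) ^ (b ⬝ᵥ v).val

/-- The Hermitian Pauli matrix `E(a,b) = i^{a·b mod 4} D(a,b)` (with `a·b` the integer inner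
product of the `0/1` lifts; note `i^{k mod 4} = i^k` in `ℂ`). -/
noncomputable def PauliE (n : ℕ) (a b : Fin n → ZMod 2) :
    Matrix (Fin n → ZMod 2) (Fin n → ZMod 2) ℂ :=
  (Complex.I ^ (∑ i, (a i).val * (b i).val)) • PauliD n a b

/-- The transversal `θ` Z-rotation `exp(iθZ)^{⊗n}` on `ℂ^{2ⁿ}`: under the identification of
the standard basis of `ℂ^{2ⁿ}` with `F₂ⁿ`, the `n`-fold Kronecker power of
`exp(iθZ) = diag(e^{iθ}, e^{−iθ})` is the diagonal matrix with `(v,v)` entry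
`∏ i, exp(iθ·(−1)^{v i})`. -/
noncomputable def transversalZRot (n : ℕ) (θ : ℝ) :
    Matrix (Fin n → ZMod 2) (Fin n → ZMod 2) ℂ :=
  Matrix.diagonal fun v => ∏ i, Complex.exp (Complex.I * θ * (-1 : ℂ) ^ ((v i).val))

/-- `Γ`: the union, over all elements `±E(a,b)` of `S`, of the supports of the
`X`-components `a`. -/
def GammaSet (n : ℕ) (S : Set (Matrix (Fin n → ZMod 2) (Fin n → ZMod 2) ℂ)) :
    Set (Fin n) :=
  {i | ∃ (ε : ℂ) (a b : Fin n → ZMod 2), (ε = 1 ∨ ε = -1) ∧ ε • PauliE n a b ∈ S ∧ a i ≠ 0}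

/-!
A code vector can only be supported on basis states `u` with `u + y ∈ Z⊥`, where `Z` is the
space of `Z`-parts of the pure-`Z` stabilizers; conversely, for every such `u` the column `u` of
`∑_{g ∈ S} g` is a code vector that does not vanish at `u`. The rotation multiplies `|u⟩` by
`exp(iθ ∑_k (-1)^{u_k})` and a stabilizer `±E(a,b)` sends `|u⟩` to a multiple of `|u + a⟩`, so
the rotation preserves the code space iff `∑_{k ∈ supp a} (-1)^{u_k} = 0` for all such `u`: for
`θ = π/2^(n+2)` the two exponents differ by less than `2π/θ`, so equal phases force them equal.

Elements of `Z⊥` are constant on the components of `G`, which gives condition (1) since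
`a ∈ Z⊥`. Averaging the signed sum over `z ∈ Z⊥` against the character `(-1)^{z_i}` keeps only
the `k` with `e_i + e_k ∈ Z`, that is the component of `i`, and so isolates the balance condition
(2) of that component; conversely (1) and (2) make the signed sum vanish component by component.
-/

theorem ZMod.two_cases (x : ZMod 2) : x = 0 ∨ x = 1 := by decide +revert

theorem ZModModule.eq_add_iff_add_eq {M : Type*} [AddCommGroup M] [Module (ZMod 2) M]
    {u v a : M} : u = v + a ↔ u + a = v := by
  rw [← sub_eq_iff_eq_add, ZModModule.sub_eq_add]

section Signs

variable {R : Type*}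

theorem neg_one_pow_val_add [Ring R] (x y : ZMod 2) :
    (-1 : R) ^ (x + y).val = (-1) ^ x.val * (-1) ^ y.val := by
  rw [ZMod.val_add, ← neg_one_pow_eq_pow_mod_two, pow_add]

theorem neg_one_pow_val_dotProduct [Ring R] {ι : Type*} [Fintype ι] (a b : ι → ZMod 2) :
    (-1 : R) ^ (a ⬝ᵥ b).val = (-1) ^ (∑ i, (a i).val * (b i).val) := by
  have : a ⬝ᵥ b = ((∑ i, (a i).val * (b i).val : ℕ) : ZMod 2) := by
    simp [dotProduct]
  rw [this, ZMod.val_natCast, ← neg_one_pow_eq_pow_mod_two]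

theorem neg_one_pow_val_eq_one_iff [Ring R] [CharZero R] (x : ZMod 2) :
    (-1 : R) ^ x.val = 1 ↔ x = 0 := by
  rcases x.two_cases with rfl | rfl <;> norm_num [ZMod.val_one]

theorem neg_one_pow_val_eq_one_sub (x : ZMod 2) :
    (-1 : ℤ) ^ x.val = 1 - 2 * if x ≠ 0 then 1 else 0 := by
  decide +revert

theorem ne_zero_of_eq_one_or_eq_neg_one [Ring R] [Nontrivial R] {ε : R}
    (h : ε = 1 ∨ ε = -1) : ε ≠ 0 := by
  rcases h with rfl | rfl <;> simp

theorem mul_eq_one_or_eq_neg_one [Monoid R] [HasDistribNeg R] {ε ε' : R}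
    (h : ε = 1 ∨ ε = -1) (h' : ε' = 1 ∨ ε' = -1) : ε * ε' = 1 ∨ ε * ε' = -1 := by
  rcases h with rfl | rfl <;> rcases h' with rfl | rfl <;> simp

end Signs

section SignSum

variable {ι : Type*}

/-- For `s = univ` this is `n - 2 w_H(u)`, the exponent of the phase that the transversal
rotation puts on `|u⟩`. -/
def signSum (s : Finset ι) (u : ι → ZMod 2) : ℤ := ∑ k ∈ s, (-1) ^ (u k).val

theorem signSum_eq_card_sub (s : Finset ι) (u : ι → ZMod 2) :
    signSum s u = #s - 2 * #{k ∈ s | u k ≠ 0} := by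
  simp only [signSum, neg_one_pow_val_eq_one_sub, sum_sub_distrib, ← mul_sum, sum_boole]
  simp

theorem signSum_eq_zero_iff (s : Finset ι) (u : ι → ZMod 2) :
    signSum s u = 0 ↔ 2 * #{k ∈ s | u k ≠ 0} = #s := by
  rw [signSum_eq_card_sub]
  omega

theorem signSum_setOf_eq_zero_iff [Fintype ι] (p : ι → Prop) [DecidablePred p]
    (u : ι → ZMod 2) :
    signSum {k | p k} u = 0 ↔
      Even {k | p k}.ncard ∧ 2 * {k | p k ∧ u k ≠ 0}.ncard = {k | p k}.ncard := by
  classical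
  rw [signSum_eq_zero_iff, filter_filter]
  simp only [Set.ncard_eq_toFinset_card', Set.toFinset_ofPred]
  exact ⟨fun h => ⟨⟨_, h.symm.trans (two_mul _)⟩, h⟩, And.right⟩

theorem signSum_add (s : Finset ι) (u a : ι → ZMod 2) :
    signSum s (u + a) = signSum s u - 2 * signSum {k ∈ s | a k ≠ 0} u := by
  rw [signSum, signSum, signSum, sum_filter, mul_sum, ← sum_sub_distrib]
  refine sum_congr rfl fun k _ => ?_
  rw [Pi.add_apply, neg_one_pow_val_add]
  rcases (a k).two_cases with h | h <;> simp [h, ZMod.val_one]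
  ring

theorem abs_signSum_le (s : Finset ι) (u : ι → ZMod 2) : |signSum s u| ≤ #s := by
  calc |signSum s u| ≤ ∑ k ∈ s, |(-1 : ℤ) ^ (u k).val| := abs_sum_le_sum_abs _ _
    _ = #s := by simp

theorem signSum_add_of_forall_eq (s : Finset ι) (y : ι → ZMod 2) {z : ι → ZMod 2} {c : ZMod 2}
    (hz : ∀ k ∈ s, z k = c) : signSum s (y + z) = (-1) ^ c.val * signSum s y := by
  rw [signSum, signSum, mul_sum]
  refine sum_congr rfl fun k hk => ?_
  rw [Pi.add_apply, neg_one_pow_val_add, hz k hk, mul_comm]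

end SignSum

theorem transversalZRot_eq_diagonal (n : ℕ) (θ : ℝ) :
    transversalZRot n θ =
      diagonal fun u => Complex.exp (Complex.I * θ * signSum univ u) := by
  rw [transversalZRot]
  congr 1
  ext u
  rw [← Complex.exp_sum, signSum]
  push_cast
  rw [mul_sum]

theorem eq_of_exp_I_mul_pi_div_two_pow_eq {l : ℕ} {t₁ t₂ : ℤ}
    (h : Complex.exp (Complex.I * (Real.pi / 2 ^ l : ℝ) * t₁) =
      Complex.exp (Complex.I * (Real.pi / 2 ^ l : ℝ) * t₂))
    (hlt : |t₁ - t₂| < 2 ^ (l + 1)) : t₁ = t₂ := by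
  obtain ⟨k, hk⟩ := Complex.exp_eq_exp_iff_exists_int.mp h
  have hk' : t₁ - t₂ = k * 2 ^ (l + 1) := by
    have : ((t₁ - t₂ : ℤ) : ℂ) = ((k * 2 ^ (l + 1) : ℤ) : ℂ) := by
      push_cast at hk ⊢
      field_simp at hk
      linear_combination hk
    exact_mod_cast this
  obtain rfl : k = 0 := by
    by_contra hk0
    rw [hk', abs_mul, abs_pow, abs_two] at hlt
    have : (1 : ℤ) ≤ |k| := Int.one_le_abs hk0
    nlinarith [pow_pos (two_pos (α := ℤ)) (l + 1)]
  omega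

theorem mul_sum_eq_sum_of_mul_mem {A : Type*} [Semiring A] {T : Finset A} {h : A}
    (hT : ∀ g ∈ T, h * g ∈ T) (hh : h * h = 1) : h * ∑ g ∈ T, g = ∑ g ∈ T, g := by
  rw [mul_sum]
  refine sum_nbij' (h * ·) (h * ·) hT hT ?_ ?_ fun _ _ => rfl <;>
    exact fun g _ => by simp [← mul_assoc, hh]

theorem exists_dotProduct_eq_one_of_notMem {K ι : Type*} [Field K] [Fintype ι] [DecidableEq ι]
    {p : Submodule K (ι → K)} {w : ι → K} (hw : w ∉ p) :
    ∃ z : ι → K, (∀ v ∈ p, z ⬝ᵥ v = 0) ∧ z ⬝ᵥ w = 1 := by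
  obtain ⟨f, hfw, hfp⟩ := p.exists_dual_map_eq_bot_of_notMem hw inferInstance
  set z : ι → K := fun i => f fun j => if i = j then 1 else 0
  have hf : ∀ v, f v = z ⬝ᵥ v := fun v => by
    rw [LinearMap.pi_apply_eq_sum_univ f v, dotProduct_comm]
    rfl
  refine ⟨(f w)⁻¹ • z, fun v hv => ?_, ?_⟩
  · have hfv := Submodule.mem_map_of_mem (f := f) hv
    rw [hfp, Submodule.mem_bot] at hfv
    rw [smul_dotProduct, ← hf, hfv, smul_zero]
  · rw [smul_dotProduct, ← hf, smul_eq_mul, inv_mul_cancel₀ hfw]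

open Classical in
theorem sum_neg_one_pow_dotProduct {ι : Type*} [Fintype ι] [DecidableEq ι]
    {s : Set (ι → ZMod 2)} (h0 : 0 ∈ s) (hadd : ∀ v ∈ s, ∀ w ∈ s, v + w ∈ s) (w : ι → ZMod 2) :
    ∑ z with ∀ v ∈ s, z ⬝ᵥ v = 0, (-1 : ℤ) ^ (z ⬝ᵥ w).val =
      if w ∈ s then (#{z | ∀ v ∈ s, z ⬝ᵥ v = 0} : ℤ) else 0 := by
  split_ifs with hw
  · rw [sum_congr rfl fun z hz => by rw [(mem_filter.1 hz).2 w hw], sum_const]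
    simp
  · let p : Submodule (ZMod 2) (ι → ZMod 2) := AddSubgroup.toZModSubmodule 2
      { carrier := s, add_mem' := fun hv hw => hadd _ hv _ hw, zero_mem' := h0,
        neg_mem' := fun hv => by rwa [ZModModule.neg_eq_self] }
    obtain ⟨z₀, hz₀, hz₀w⟩ := exists_dotProduct_eq_one_of_notMem (p := p) hw
    -- translation by `z₀` pairs off the annihilator, flipping the sign of each summand
    refine sum_involution (fun z _ => z + z₀) (fun z _ => ?_) (fun z _ _ h => ?_)
      (fun z hz => ?_) (fun z _ => by rw [add_assoc, ZModModule.add_self, add_zero])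
    · rw [add_dotProduct, hz₀w, neg_one_pow_val_add]
      simp [ZMod.val_one]
    · rw [add_eq_left] at h
      simp [h] at hz₀w
    · simp only [mem_filter, mem_univ, true_and] at hz ⊢
      intro v hv
      rw [add_dotProduct, hz v hv, hz₀ v hv, add_zero]

section Pauli

variable {n : ℕ}

theorem PauliE_apply (a b u v : Fin n → ZMod 2) :
    PauliE n a b u v = if u + a = v then
      Complex.I ^ (∑ i, (a i).val * (b i).val) * (-1) ^ (b ⬝ᵥ v).val else 0 := by
  simp only [PauliE, PauliD, Matrix.smul_apply, smul_eq_mul, ZModModule.eq_add_iff_add_eq]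
  split_ifs <;> ring

theorem PauliE_mulVec_apply (a b : Fin n → ZMod 2) (ψ : (Fin n → ZMod 2) → ℂ)
    (u : Fin n → ZMod 2) :
    (PauliE n a b *ᵥ ψ) u =
      Complex.I ^ (∑ i, (a i).val * (b i).val) * (-1) ^ (b ⬝ᵥ (u + a)).val * ψ (u + a) := by
  simp [mulVec, dotProduct, PauliE_apply, ite_mul]

theorem PauliE_mul_apply (a b a' b' u w : Fin n → ZMod 2) :
    (PauliE n a b * PauliE n a' b') u w =
      if u + a + a' = w then
        Complex.I ^ (∑ i, (a i).val * (b i).val) * Complex.I ^ (∑ i, (a' i).val * (b' i).val) *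
          ((-1) ^ (b ⬝ᵥ (u + a)).val * (-1) ^ (b' ⬝ᵥ w).val) else 0 := by
  simp only [mul_apply, PauliE_apply, ite_mul, zero_mul, sum_ite_eq, mem_univ, if_true]
  split_ifs <;> ring

theorem PauliE_zero_zero : PauliE n 0 0 = 1 := by
  ext u v
  simp [PauliE_apply, one_apply]

theorem PauliE_zero_mul_PauliE_zero (v w : Fin n → ZMod 2) :
    PauliE n 0 v * PauliE n 0 w = PauliE n 0 (v + w) := by
  ext u x
  simp only [PauliE_mul_apply, PauliE_apply, add_zero]
  split_ifs with h
  · simp [← h, add_dotProduct, neg_one_pow_val_add]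
  · rfl

theorem PauliE_mul_self (a b : Fin n → ZMod 2) : PauliE n a b * PauliE n a b = 1 := by
  ext u w
  rw [PauliE_mul_apply, add_assoc, ZModModule.add_self, add_zero, one_apply]
  split_ifs with h
  · subst h
    rw [← pow_add, ← two_mul, pow_mul, Complex.I_sq, dotProduct_add, neg_one_pow_val_add,
      dotProduct_comm b a, neg_one_pow_val_dotProduct a b]
    calc _ = ((-1 : ℂ) ^ (∑ i, (a i).val * (b i).val)) ^ 2 * ((-1) ^ (b ⬝ᵥ u).val) ^ 2 := by
          ring
      _ = 1 := by simp [← pow_mul]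
  · rfl

theorem smul_PauliE_mul_self {ε : ℂ} (hε : ε = 1 ∨ ε = -1) (a b : Fin n → ZMod 2) :
    (ε • PauliE n a b) * (ε • PauliE n a b) = 1 := by
  rw [smul_mul_smul_comm, PauliE_mul_self]
  rcases hε with rfl | rfl <;> norm_num

theorem dotProduct_eq_zero_of_commute {a b v : Fin n → ZMod 2}
    (h : Commute (PauliE n a b) (PauliE n 0 v)) : a ⬝ᵥ v = 0 := by
  have h0 := congrFun (congrFun h.eq 0) a
  simp only [PauliE_mul_apply, zero_add, add_zero, if_true, dotProduct_zero,
    Pi.zero_apply, ZMod.val_zero, zero_mul, sum_const_zero, pow_zero, mul_one, one_mul] at h0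
  rw [dotProduct_comm, ← neg_one_pow_val_eq_one_iff (R := ℂ)]
  rw [← mul_assoc] at h0
  exact (mul_eq_left₀ (by simp)).mp h0

theorem smul_PauliE_apply_self (ε : ℂ) (a b u : Fin n → ZMod 2) :
    (ε • PauliE n a b) u u = if a = 0 then ε * (-1) ^ (b ⬝ᵥ u).val else 0 := by
  split_ifs with ha <;> simp [PauliE_apply, ha]

theorem smul_PauliE_mulVec_diagonal_mulVec (ε : ℂ) (a b : Fin n → ZMod 2)
    (d ψ : (Fin n → ZMod 2) → ℂ) :
    (ε • PauliE n a b) *ᵥ (diagonal d *ᵥ ψ) =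
      diagonal (fun u => d (u + a)) *ᵥ ((ε • PauliE n a b) *ᵥ ψ) := by
  ext u
  simp only [smul_mulVec, Pi.smul_apply, PauliE_mulVec_apply, mulVec_diagonal, smul_eq_mul]
  ring

theorem smul_PauliE_mulVec_diagonal_mulVec_eq_iff {ε : ℂ} {a b : Fin n → ZMod 2}
    {d ψ : (Fin n → ZMod 2) → ℂ} (hψ : (ε • PauliE n a b) *ᵥ ψ = ψ) :
    (ε • PauliE n a b) *ᵥ (diagonal d *ᵥ ψ) = diagonal d *ᵥ ψ ↔
      ∀ u, d (u + a) * ψ u = d u * ψ u := by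
  simp only [smul_PauliE_mulVec_diagonal_mulVec, hψ, funext_iff, mulVec_diagonal]

end Pauli

section Stabilizer

variable {n : ℕ} {S : Set (Matrix (Fin n → ZMod 2) (Fin n → ZMod 2) ℂ)} {y : Fin n → ZMod 2}

def IsSignedPauliSet (S : Set (Matrix (Fin n → ZMod 2) (Fin n → ZMod 2) ℂ)) : Prop :=
  ∀ g ∈ S, ∃ (ε : ℂ) (a b : Fin n → ZMod 2), (ε = 1 ∨ ε = -1) ∧ g = ε • PauliE n a b

def zVectors (S : Set (Matrix (Fin n → ZMod 2) (Fin n → ZMod 2) ℂ)) : Set (Fin n → ZMod 2) :=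
  {v | ∃ ε : ℂ, (ε = 1 ∨ ε = -1) ∧ ε • PauliE n 0 v ∈ S}

def zPerp (S : Set (Matrix (Fin n → ZMod 2) (Fin n → ZMod 2) ℂ)) : Set (Fin n → ZMod 2) :=
  {z | ∀ v ∈ zVectors S, z ⬝ᵥ v = 0}

def HasZSigns (S : Set (Matrix (Fin n → ZMod 2) (Fin n → ZMod 2) ℂ)) (y : Fin n → ZMod 2) :
    Prop :=
  ∀ (ε : ℂ) (v : Fin n → ZMod 2), (ε = 1 ∨ ε = -1) →
    ε • PauliE n 0 v ∈ S → ε = (-1 : ℂ) ^ (y ⬝ᵥ v).val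

theorem IsSignedPauliSet.finite (hform : IsSignedPauliSet S) : S.Finite := by
  refine (((Set.toFinite {1, -1}).prod Set.finite_univ).image
    fun p : ℂ × (Fin n → ZMod 2) × (Fin n → ZMod 2) => p.1 • PauliE n p.2.1 p.2.2).subset ?_
  intro g hg
  obtain ⟨ε, a, b, hε, rfl⟩ := hform g hg
  exact ⟨(ε, a, b), ⟨hε, Set.mem_univ _⟩, rfl⟩

theorem zero_mem_zVectors (hone : 1 ∈ S) : 0 ∈ zVectors S :=
  ⟨1, .inl rfl, by rwa [one_smul, PauliE_zero_zero]⟩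

theorem add_mem_zVectors (hmul : ∀ g ∈ S, ∀ h ∈ S, g * h ∈ S) {v w : Fin n → ZMod 2}
    (hv : v ∈ zVectors S) (hw : w ∈ zVectors S) : v + w ∈ zVectors S := by
  obtain ⟨ε, hε, hv⟩ := hv
  obtain ⟨ε', hε', hw⟩ := hw
  refine ⟨ε * ε', mul_eq_one_or_eq_neg_one hε hε', ?_⟩
  simpa only [smul_mul_smul_comm, PauliE_zero_mul_PauliE_zero] using hmul _ hv _ hw

theorem mem_zPerp_of_smul_PauliE_mem (hcomm : ∀ g ∈ S, ∀ h ∈ S, g * h = h * g) {ε : ℂ}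
    {a b : Fin n → ZMod 2} (hε : ε = 1 ∨ ε = -1) (hg : ε • PauliE n a b ∈ S) :
    a ∈ zPerp S := by
  rintro v ⟨ε', hε', hv⟩
  apply dotProduct_eq_zero_of_commute (b := b)
  have h := hcomm _ hg _ hv
  rw [smul_mul_smul_comm, smul_mul_smul_comm, mul_comm ε'] at h
  exact smul_right_injective _ (ne_zero_of_eq_one_or_eq_neg_one (mul_eq_one_or_eq_neg_one hε hε')) h

theorem add_mem_zPerp_of_apply_ne_zero (hy : HasZSigns S y) {ψ : (Fin n → ZMod 2) → ℂ}
    (hψ : ∀ g ∈ S, g *ᵥ ψ = ψ) {u : Fin n → ZMod 2} (hu : ψ u ≠ 0) : u + y ∈ zPerp S := by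
  rintro v ⟨ε, hε, hv⟩
  have h := congrFun (hψ _ hv) u
  simp only [smul_mulVec, Pi.smul_apply, PauliE_mulVec_apply, smul_eq_mul, add_zero,
    Pi.zero_apply, ZMod.val_zero, zero_mul, sum_const_zero, pow_zero, one_mul] at h
  have h1 : ε * (-1) ^ (v ⬝ᵥ u).val = 1 :=
    mul_right_cancel₀ hu (by linear_combination h)
  rw [hy ε v hε hv, ← neg_one_pow_val_add, neg_one_pow_val_eq_one_iff] at h1
  rwa [add_dotProduct, dotProduct_comm u, add_comm]

theorem apply_self_eq_zero_or_one (hform : IsSignedPauliSet S) (hy : HasZSigns S y)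
    {u : Fin n → ZMod 2} (hu : u + y ∈ zPerp S) {g : Matrix (Fin n → ZMod 2) (Fin n → ZMod 2) ℂ}
    (hg : g ∈ S) : g u u = 0 ∨ g u u = 1 := by
  obtain ⟨ε, a, b, hε, rfl⟩ := hform g hg
  rw [smul_PauliE_apply_self]
  split_ifs with ha
  · subst ha
    right
    rw [hy ε b hε hg, ← neg_one_pow_val_add, neg_one_pow_val_eq_one_iff, dotProduct_comm y,
      ← dotProduct_add, dotProduct_comm, add_comm]
    exact hu b ⟨ε, hε, hg⟩
  · exact .inl rfl

theorem exists_mulVec_eq_self_apply_ne_zero (hform : IsSignedPauliSet S) (hone : 1 ∈ S)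
    (hmul : ∀ g ∈ S, ∀ h ∈ S, g * h ∈ S) (hy : HasZSigns S y) {u : Fin n → ZMod 2}
    (hu : u + y ∈ zPerp S) :
    ∃ ψ : (Fin n → ZMod 2) → ℂ, (∀ g ∈ S, g *ᵥ ψ = ψ) ∧ ψ u ≠ 0 := by
  set T := hform.finite.toFinset
  have hT : ∀ g, g ∈ T ↔ g ∈ S := fun g => Set.Finite.mem_toFinset _
  refine ⟨(∑ g ∈ T, g) *ᵥ Pi.single u 1, fun h hh => ?_, ?_⟩
  · obtain ⟨ε, a, b, hε, rfl⟩ := hform h hh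
    rw [mulVec_mulVec, mul_sum_eq_sum_of_mul_mem
      (fun g hg => (hT _).2 (hmul _ hh _ ((hT g).1 hg))) (smul_PauliE_mul_self hε a b)]
  · have hre : ∀ g ∈ T, 0 ≤ (g u u).re := fun g hg => by
      rcases apply_self_eq_zero_or_one hform hy hu ((hT g).1 hg) with h | h <;> simp [h]
    have h1 : 1 ≤ ∑ g ∈ T, (g u u).re := by simpa using single_le_sum hre ((hT 1).2 hone)
    intro h0
    rw [mulVec_single_one, col_apply, Matrix.sum_apply] at h0
    rw [← Complex.re_sum, h0] at h1
    norm_num at h1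

def SignBalanced (S : Set (Matrix (Fin n → ZMod 2) (Fin n → ZMod 2) ℂ))
    (y : Fin n → ZMod 2) : Prop :=
  ∀ (ε : ℂ) (a b : Fin n → ZMod 2), (ε = 1 ∨ ε = -1) → ε • PauliE n a b ∈ S →
    ∀ u, u + y ∈ zPerp S → signSum {k | a k ≠ 0} u = 0

theorem mulVec_transversalZRot_mulVec_of_signBalanced (hform : IsSignedPauliSet S)
    (hy : HasZSigns S y) (hK : SignBalanced S y) (θ : ℝ) {ψ : (Fin n → ZMod 2) → ℂ}
    (hψ : ∀ g ∈ S, g *ᵥ ψ = ψ) {g : Matrix (Fin n → ZMod 2) (Fin n → ZMod 2) ℂ} (hg : g ∈ S) :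
    g *ᵥ (transversalZRot n θ *ᵥ ψ) = transversalZRot n θ *ᵥ ψ := by
  obtain ⟨ε, a, b, hε, rfl⟩ := hform g hg
  rw [transversalZRot_eq_diagonal, smul_PauliE_mulVec_diagonal_mulVec_eq_iff (hψ _ hg)]
  intro u
  by_cases hu : ψ u = 0
  · simp [hu]
  · rw [signSum_add, hK ε a b hε hg u (add_mem_zPerp_of_apply_ne_zero hy hψ hu), mul_zero,
      sub_zero]

theorem signBalanced_of_forall_mulVec_transversalZRot_mulVec (hform : IsSignedPauliSet S)
    (hone : 1 ∈ S) (hmul : ∀ g ∈ S, ∀ h ∈ S, g * h ∈ S) (hy : HasZSigns S y)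
    (h : ∀ ψ : (Fin n → ZMod 2) → ℂ, (∀ g ∈ S, g *ᵥ ψ = ψ) → ∀ g ∈ S,
      g *ᵥ (transversalZRot n (Real.pi / 2 ^ (n + 2)) *ᵥ ψ) =
        transversalZRot n (Real.pi / 2 ^ (n + 2)) *ᵥ ψ) :
    SignBalanced S y := by
  intro ε a b hε hg u hu
  obtain ⟨ψ, hψ, hψu⟩ := exists_mulVec_eq_self_apply_ne_zero hform hone hmul hy hu
  have hu' := h ψ hψ _ hg
  rw [transversalZRot_eq_diagonal, smul_PauliE_mulVec_diagonal_mulVec_eq_iff (hψ _ hg)] at hu'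
  have hsupp : |signSum {k | a k ≠ 0} u| ≤ n :=
    (abs_signSum_le _ u).trans (by exact_mod_cast (card_filter_le _ _).trans (by simp))
  have hn : (n : ℤ) < 2 ^ n := by exact_mod_cast n.lt_two_pow_self
  have heq := eq_of_exp_I_mul_pi_div_two_pow_eq (mul_right_cancel₀ hψu (hu' u)) (by
    rw [signSum_add, sub_sub_cancel_left, abs_neg, abs_mul, abs_two, pow_succ, pow_succ, pow_succ]
    linarith)
  rw [signSum_add] at heq
  linarith

theorem forall_mulVec_transversalZRot_mulVec_iff_signBalanced (hform : IsSignedPauliSet S)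
    (hone : 1 ∈ S) (hmul : ∀ g ∈ S, ∀ h ∈ S, g * h ∈ S) (hy : HasZSigns S y) :
    (∀ l : ℕ, 2 ≤ l → ∀ ψ : (Fin n → ZMod 2) → ℂ, (∀ g ∈ S, g *ᵥ ψ = ψ) → ∀ g ∈ S,
      g *ᵥ (transversalZRot n (Real.pi / 2 ^ l) *ᵥ ψ) = transversalZRot n (Real.pi / 2 ^ l) *ᵥ ψ)
      ↔ SignBalanced S y :=
  ⟨fun h => signBalanced_of_forall_mulVec_transversalZRot_mulVec hform hone hmul hy
      (h (n + 2) (by omega)),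
    fun hK _ _ _ hψ _ hg => mulVec_transversalZRot_mulVec_of_signBalanced hform hy hK _ hψ hg⟩

end Stabilizer

section Graph

variable {n : ℕ} {S : Set (Matrix (Fin n → ZMod 2) (Fin n → ZMod 2) ℂ)} {G : SimpleGraph (Fin n)}
  {y : Fin n → ZMod 2}

def IsZPairGraph (S : Set (Matrix (Fin n → ZMod 2) (Fin n → ZMod 2) ℂ))
    (G : SimpleGraph (Fin n)) : Prop :=
  ∀ i j, G.Adj i j ↔ i ≠ j ∧ i ∈ GammaSet n S ∧ j ∈ GammaSet n S ∧
    Pi.single i 1 + Pi.single j 1 ∈ zVectors S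

theorem apply_eq_of_reachable (hG : IsZPairGraph S G) {z : Fin n → ZMod 2} (hz : z ∈ zPerp S)
    {i j : Fin n} (h : G.Reachable i j) : z i = z j := by
  obtain ⟨p⟩ := h
  induction p with
  | nil => rfl
  | cons hadj _ ih =>
    have h := hz _ ((hG _ _).1 hadj).2.2.2
    rwa [dotProduct_add, dotProduct_single, dotProduct_single, mul_one, mul_one,
      CharTwo.add_eq_zero, ih] at h

theorem single_add_single_mem_zVectors_of_reachable (hG : IsZPairGraph S G) (hone : 1 ∈ S)
    (hmul : ∀ g ∈ S, ∀ h ∈ S, g * h ∈ S) {i j : Fin n} (h : G.Reachable i j) :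
    Pi.single i 1 + Pi.single j 1 ∈ zVectors S := by
  obtain ⟨p⟩ := h
  induction p with
  | nil => rw [ZModModule.add_self]; exact zero_mem_zVectors hone
  | @cons _ k _ hadj _ ih =>
    rw [← ZModModule.add_add_add_cancel _ (Pi.single k 1)]
    exact add_mem_zVectors hmul ((hG _ _).1 hadj).2.2.2 ih

theorem reachable_iff_of_forall_reachable_ne_zero (hG : IsZPairGraph S G) (hone : 1 ∈ S)
    (hmul : ∀ g ∈ S, ∀ h ∈ S, g * h ∈ S) {ε : ℂ} {a b : Fin n → ZMod 2}
    (hε : ε = 1 ∨ ε = -1) (hg : ε • PauliE n a b ∈ S) {i : Fin n}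
    (hC : ∀ j, G.Reachable i j → a j ≠ 0) (k : Fin n) :
    G.Reachable i k ↔ a k ≠ 0 ∧ Pi.single i 1 + Pi.single k 1 ∈ zVectors S := by
  refine ⟨fun h => ⟨hC k h, single_add_single_mem_zVectors_of_reachable hG hone hmul h⟩, ?_⟩
  rintro ⟨hk, hv⟩
  rcases eq_or_ne i k with rfl | hik
  · rfl
  · exact ((hG i k).2 ⟨hik, ⟨ε, a, b, hε, hg, hC i .rfl⟩, ⟨ε, a, b, hε, hg, hk⟩, hv⟩).reachable

open Classical in
theorem signSum_reachable_eq_zero (hG : IsZPairGraph S G) (hone : 1 ∈ S)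
    (hmul : ∀ g ∈ S, ∀ h ∈ S, g * h ∈ S) {ε : ℂ} {a b : Fin n → ZMod 2}
    (hε : ε = 1 ∨ ε = -1) (hg : ε • PauliE n a b ∈ S)
    (hK : ∀ u, u + y ∈ zPerp S → signSum {k | a k ≠ 0} u = 0) {i : Fin n}
    (hC : ∀ j, G.Reachable i j → a j ≠ 0) :
    signSum {j | G.Reachable i j} y = 0 := by
  set Z : Finset (Fin n → ZMod 2) := {z | ∀ v ∈ zVectors S, z ⬝ᵥ v = 0}
  have hchar := sum_neg_one_pow_dotProduct (zero_mem_zVectors hone)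
    (fun _ hv _ hw => add_mem_zVectors hmul hv hw)
  have hsplit : ∀ z k, (-1 : ℤ) ^ (z i).val * (-1) ^ ((y + z) k).val =
      (-1) ^ (y k).val * (-1) ^ (z ⬝ᵥ (Pi.single i 1 + Pi.single k 1)).val := fun z k => by
    rw [dotProduct_add, dotProduct_single, dotProduct_single, mul_one, mul_one, Pi.add_apply,
      neg_one_pow_val_add, neg_one_pow_val_add]
    ring
  have hcomp : ({k | a k ≠ 0 ∧ Pi.single i 1 + Pi.single k 1 ∈ zVectors S} : Finset (Fin n)) =
      ({j | G.Reachable i j} : Finset (Fin n)) := by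
    ext k
    simp [reachable_iff_of_forall_reachable_ne_zero hG hone hmul hε hg hC k]
  have key : ∑ z ∈ Z, (-1 : ℤ) ^ (z i).val * signSum {k | a k ≠ 0} (y + z) =
      #Z * signSum {j | G.Reachable i j} y := by
    calc _ = ∑ k with a k ≠ 0, (-1 : ℤ) ^ (y k).val *
          ∑ z ∈ Z, (-1) ^ (z ⬝ᵥ (Pi.single i 1 + Pi.single k 1)).val := by
          simp only [signSum, mul_sum, hsplit]
          exact sum_comm
      _ = ∑ k with a k ≠ 0, if Pi.single i 1 + Pi.single k 1 ∈ zVectors S then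
          (#Z : ℤ) * (-1) ^ (y k).val else 0 := by
          refine sum_congr rfl fun k _ => ?_
          rw [hchar]
          split_ifs <;> ring
      _ = _ := by rw [← sum_filter, filter_filter, hcomp, signSum, mul_sum]
  have hzero : ∑ z ∈ Z, (-1 : ℤ) ^ (z i).val * signSum {k | a k ≠ 0} (y + z) = 0 :=
    sum_eq_zero fun z hz => by
      have hz' : y + z + y ∈ zPerp S := by
        rw [add_right_comm, ZModModule.add_self, zero_add]
        exact (mem_filter.1 hz).2
      rw [hK _ hz', mul_zero]
  have hZ : 0 < #Z := card_pos.2 ⟨0, by simp [Z]⟩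
  rw [hzero] at key
  exact (mul_eq_zero.1 key.symm).resolve_left (by positivity)

open Classical in
theorem signSum_eq_zero_of_forall_signSum_reachable_eq_zero (hG : IsZPairGraph S G)
    {a : Fin n → ZMod 2} (hclosed : ∀ i j, a i ≠ 0 → G.Reachable i j → a j ≠ 0)
    (hbal : ∀ i, a i ≠ 0 → signSum {j | G.Reachable i j} y = 0) {u : Fin n → ZMod 2}
    (hu : u + y ∈ zPerp S) : signSum {k | a k ≠ 0} u = 0 := by
  obtain ⟨z, hz, rfl⟩ : ∃ z ∈ zPerp S, u = y + z :=
    ⟨u + y, hu, by rw [add_comm u, ← add_assoc, ZModModule.add_self, zero_add]⟩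
  rw [signSum, ← sum_fiberwise_of_maps_to (g := G.connectedComponentMk)
    fun k hk => mem_image_of_mem _ hk]
  refine sum_eq_zero fun c hc => ?_
  obtain ⟨i, hi, rfl⟩ := mem_image.1 hc
  replace hi : a i ≠ 0 := (mem_filter.1 hi).2
  have hfiber : ({k | a k ≠ 0 ∧ G.connectedComponentMk k = G.connectedComponentMk i} :
      Finset (Fin n)) = ({j | G.Reachable i j} : Finset (Fin n)) := by
    ext k
    simp only [mem_filter, mem_univ, true_and, SimpleGraph.ConnectedComponent.eq]
    exact ⟨fun h => h.2.symm, fun h => ⟨hclosed i k hi h, h.symm⟩⟩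
  rw [filter_filter, hfiber, ← signSum, signSum_add_of_forall_eq _ y
    (fun k hk => (apply_eq_of_reachable hG hz (mem_filter.1 hk).2).symm), hbal i hi, mul_zero]

theorem signBalanced_iff (hcomm : ∀ g ∈ S, ∀ h ∈ S, g * h = h * g) (hone : 1 ∈ S)
    (hmul : ∀ g ∈ S, ∀ h ∈ S, g * h ∈ S) (hG : IsZPairGraph S G) :
    SignBalanced S y ↔ ∀ (ε : ℂ) (a b : Fin n → ZMod 2), (ε = 1 ∨ ε = -1) →
      ε • PauliE n a b ∈ S → a ≠ 0 →
        (∀ i j, a i ≠ 0 → G.Reachable i j → a j ≠ 0) ∧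
        (∀ i, (∀ j, G.Reachable i j → a j ≠ 0) →
          Even ({j | G.Reachable i j}.ncard) ∧
          2 * ({j | G.Reachable i j ∧ y j ≠ 0}.ncard) = {j | G.Reachable i j}.ncard) := by
  classical
  constructor
  · intro hK ε a b hε hg _
    have ha := mem_zPerp_of_smul_PauliE_mem hcomm hε hg
    refine ⟨fun i j hi hij => apply_eq_of_reachable hG ha hij ▸ hi, fun i hC => ?_⟩
    exact (signSum_setOf_eq_zero_iff _ y).1
      (signSum_reachable_eq_zero hG hone hmul hε hg (hK ε a b hε hg) hC)
  · intro h ε a b hε hg u hu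
    rcases eq_or_ne a 0 with rfl | ha
    · simp [signSum]
    obtain ⟨hclosed, hbal⟩ := h ε a b hε hg ha
    exact signSum_eq_zero_of_forall_signSum_reachable_eq_zero hG hclosed
      (fun i hi => (signSum_setOf_eq_zero_iff _ y).2 (hbal i (hclosed i · hi))) hu

end Graph

theorem oblivious_iff_balanced_weight_two_general (n : ℕ)
    (S : Set (Matrix (Fin n → ZMod 2) (Fin n → ZMod 2) ℂ))
    (hform : ∀ g ∈ S, ∃ (ε : ℂ) (a b : Fin n → ZMod 2),
      (ε = 1 ∨ ε = -1) ∧ g = ε • PauliE n a b)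
    (hone : (1 : Matrix (Fin n → ZMod 2) (Fin n → ZMod 2) ℂ) ∈ S)
    (hmul : ∀ g ∈ S, ∀ h ∈ S, g * h ∈ S)
    (hcomm : ∀ g ∈ S, ∀ h ∈ S, g * h = h * g)
    (y : Fin n → ZMod 2)
    (hy : ∀ (ε : ℂ) (v : Fin n → ZMod 2), (ε = 1 ∨ ε = -1) →
      ε • PauliE n 0 v ∈ S → ε = (-1 : ℂ) ^ (y ⬝ᵥ v).val)
    (G : SimpleGraph (Fin n))
    (hG : ∀ i j, G.Adj i j ↔ i ≠ j ∧ i ∈ GammaSet n S ∧ j ∈ GammaSet n S ∧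
      ∃ ε : ℂ, (ε = 1 ∨ ε = -1) ∧
        ε • PauliE n 0 (Pi.single i 1 + Pi.single j 1) ∈ S) :
    (∀ l : ℕ, 2 ≤ l → ∀ ψ : (Fin n → ZMod 2) → ℂ,
      (∀ g ∈ S, g.mulVec ψ = ψ) →
      ∀ g ∈ S, g.mulVec ((transversalZRot n (Real.pi / 2 ^ l)).mulVec ψ)
        = (transversalZRot n (Real.pi / 2 ^ l)).mulVec ψ)
    ↔ (∀ (ε : ℂ) (a b : Fin n → ZMod 2), (ε = 1 ∨ ε = -1) →
        ε • PauliE n a b ∈ S → a ≠ 0 →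
        (∀ i j, a i ≠ 0 → G.Reachable i j → a j ≠ 0) ∧
        (∀ i, (∀ j, G.Reachable i j → a j ≠ 0) →
          Even ({j | G.Reachable i j}.ncard) ∧
          2 * ({j | G.Reachable i j ∧ y j ≠ 0}.ncard) = {j | G.Reachable i j}.ncard)) := by
  rw [forall_mulVec_transversalZRot_mulVec_iff_signBalanced hform hone hmul hy]
  exact signBalanced_iff hcomm hone hmul hG

/-- Theorem 8 of the paper. Let `S` be a stabilizer group on `n` qubits
(a commutative set of signed Hermitian Paulis `±E(a,b)`, closed under multiplication,
containing `I` and not `−I`), let `Γ` and the graph `G` on `Γ` (joining `i, j ∈ Γ` iff some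
`ε′E(0, e_i + e_j) ∈ S`) be as above, and let `y ∈ F₂ⁿ` record the signs of the pure-`Z`
elements of `S` (`ε_v = (−1)^{y·v}`). Then the transversal `π/2^l` Z-rotation preserves the
code space `V(S)` for every `l ≥ 2` if and only if for every `±E(a,b) ∈ S` with `a ≠ 0`:
(1) `supp(a)` is the disjoint union of the connected components `Γ_k ⊆ supp(a)` (every
component meeting `supp(a)` lies in it); and (2) for every component `Γ_k ⊆ supp(a)`, its
size `N_k` is even and `w_H(y|_{Γ_k}) = N_k/2`. -/
theorem oblivious_iff_balanced_weight_two (n : ℕ) (hn : 1 ≤ n)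
    (S : Set (Matrix (Fin n → ZMod 2) (Fin n → ZMod 2) ℂ))
    (hform : ∀ g ∈ S, ∃ (ε : ℂ) (a b : Fin n → ZMod 2),
      (ε = 1 ∨ ε = -1) ∧ g = ε • PauliE n a b)
    (hone : (1 : Matrix (Fin n → ZMod 2) (Fin n → ZMod 2) ℂ) ∈ S)
    (hmul : ∀ g ∈ S, ∀ h ∈ S, g * h ∈ S)
    (hcomm : ∀ g ∈ S, ∀ h ∈ S, g * h = h * g)
    (hneg : (-1 : Matrix (Fin n → ZMod 2) (Fin n → ZMod 2) ℂ) ∉ S)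
    (y : Fin n → ZMod 2)
    (hy : ∀ (ε : ℂ) (v : Fin n → ZMod 2), (ε = 1 ∨ ε = -1) →
      ε • PauliE n 0 v ∈ S → ε = (-1 : ℂ) ^ (y ⬝ᵥ v).val)
    (G : SimpleGraph (Fin n))
    (hG : ∀ i j, G.Adj i j ↔ i ≠ j ∧ i ∈ GammaSet n S ∧ j ∈ GammaSet n S ∧
      ∃ ε : ℂ, (ε = 1 ∨ ε = -1) ∧
        ε • PauliE n 0 (Pi.single i 1 + Pi.single j 1) ∈ S) :
    (∀ l : ℕ, 2 ≤ l → ∀ ψ : (Fin n → ZMod 2) → ℂ,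
      (∀ g ∈ S, g.mulVec ψ = ψ) →
      ∀ g ∈ S, g.mulVec ((transversalZRot n (Real.pi / 2 ^ l)).mulVec ψ)
        = (transversalZRot n (Real.pi / 2 ^ l)).mulVec ψ)
    ↔ (∀ (ε : ℂ) (a b : Fin n → ZMod 2), (ε = 1 ∨ ε = -1) →
        ε • PauliE n a b ∈ S → a ≠ 0 →
        (∀ i j, a i ≠ 0 → G.Reachable i j → a j ≠ 0) ∧
        (∀ i, (∀ j, G.Reachable i j → a j ≠ 0) →
          Even ({j | G.Reachable i j}.ncard) ∧
          2 * ({j | G.Reachable i j ∧ y j ≠ 0}.ncard) = {j | G.Reachable i j}.ncard)) :=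
  oblivious_iff_balanced_weight_two_general n S hform hone hmul hcomm y hy G hG
end

section
/- Let m ≥ 1, let y ∈ F₂^m, let B ⊆ F₂^m be a binary linear code all of whose codewords have even Hamming weight, and extend ε to all of F₂^m by ε_v = (−1)^{y·v}. Let G be the simple graph on {1,…,m} in which distinct i and j are adjacent if and only if e_i + e_j ∈ B, with connected components Γ₁,…,Γ_t of sizes N_k = |Γ_k|. Suppose every N_k is even (in particular G has no isolated vertices) and w_H(y|_{Γ_k}) = N_k/2 for every k. Then for every integer l ≥ 3: (a) Σ_{v∈B} ε_v (i tan(2π/2^l))^{w_H(v)} = (sec(2π/2^l))^m, and (b) for every ω ∈ F₂^m ∖ B, Σ_{v∈B} ε_v (i tan(2π/2^l))^{w_H(v + ω)} = 0. -/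
/-!
Write `χ(a) = (-1)^a` and `θ = 2π/2^l`. Coordinatewise, `cos θ · (i tan θ)^[b ≠ 0]` equals
`½ (e^{iθ} + χ(b) e^{-iθ})`, so `cos^m θ · (i tan θ)^{w_H(u)}` is the Fourier transform at `u`
of `x ↦ 2^{-m} e^{iθ Σ_j χ(x_j)}` (note `Σ_j χ(x_j) = m - 2 w_H(x)`). Summing against `ε` over
`B`, orthogonality of characters turns `cos^m θ · Σ_{v∈B} ε_v (i tan θ)^{w_H(v+ω)}` into
`|B|/2^m · Σ_{w∈B^⊥} χ((y+w)·ω) e^{iθ Σ_j χ(y_j + w_j)}`.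
A dual codeword `w` is orthogonal to `e_i + e_j` along every edge of `G`, hence constant on each
component; as `y` is balanced on every component, so is `y + w`, and the phase is `1`.
What is left is `|B| |B^⊥| / 2^m = 1` for `ω = 0`, and a character sum over `B^⊥` that vanishes
when `ω ∉ B = (B^⊥)^⊥`.
-/

open Matrix Finset Complex

noncomputable def signChar : AddChar (ZMod 2) ℂ where
  toFun a := (-1) ^ a.val
  map_zero_eq_one' := by simp
  map_add_eq_mul' a b := by rw [ZMod.val_add, ← neg_one_pow_eq_pow_mod_two, pow_add]

namespace signChar

lemma apply (a : ZMod 2) : signChar a = (-1) ^ a.val := rfl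

lemma apply_eq_ite (a : ZMod 2) : signChar a = if a = 0 then 1 else -1 := by
  rw [apply]
  fin_cases a
  · rfl
  · exact (by norm_num : (-1 : ℂ) ^ 1 = -1)

lemma eq_one_iff {a : ZMod 2} : signChar a = 1 ↔ a = 0 := by
  rw [apply_eq_ite]
  split_ifs with h <;> norm_num [h]

lemma mul_self (a : ZMod 2) : signChar a * signChar a = 1 := by
  rw [← AddChar.map_add_eq_mul, CharTwo.add_self_eq_zero, AddChar.map_zero_eq_one]

lemma map_sum {ι : Type*} (s : Finset ι) (f : ι → ZMod 2) :
    signChar (∑ j ∈ s, f j) = ∏ j ∈ s, signChar (f j) := by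
  induction s using Finset.cons_induction with
  | empty => simp
  | cons j s hj ih => rw [sum_cons, prod_cons, AddChar.map_add_eq_mul, ih]

lemma sum_filter_mem {V S : Type*} [AddCommGroup V] [Fintype V] [SetLike S V]
    [AddSubgroupClass S V] (C : S) [DecidablePred (· ∈ C)] (f : V →+ ZMod 2) :
    ∑ v ∈ univ with v ∈ C, signChar (f v) =
      if ∀ v ∈ C, f v = 0 then (Nat.card C : ℂ) else 0 := by
  classical
  rw [sum_subtype _ (p := (· ∈ C)) (by simp), Nat.card_eq_fintype_card]
  refine (AddChar.sum_eq_ite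
    (signChar.compAddMonoidHom (f.comp (AddSubgroupClass.subtype C)))).trans (if_congr ?_ rfl rfl)
  rw [AddChar.eq_zero_iff]
  simp [eq_one_iff]

lemma sum_eq_zero_of_two_mul_ncard {ι : Type*} [Fintype ι] {p : ι → Prop} [DecidablePred p]
    {y : ι → ZMod 2} (h : 2 * {j | p j ∧ y j ≠ 0}.ncard = {j | p j}.ncard) :
    ∑ j with p j, signChar (y j) = 0 := by
  simp only [Set.ncard_eq_toFinset_card', Set.toFinset_ofPred, ne_eq] at h
  have hsplit := card_filter_add_card_filter_not (s := univ.filter p) (fun j => y j = 0)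
  simp only [filter_filter] at hsplit
  simp only [apply_eq_ite, sum_ite, sum_const, filter_filter, nsmul_eq_mul, mul_one, mul_neg]
  have : (#{j | p j ∧ y j = 0} : ℂ) = #{j | p j ∧ ¬ y j = 0} := by
    exact_mod_cast (by omega : #{j | p j ∧ y j = 0} = #{j | p j ∧ ¬ y j = 0})
  rw [this, add_neg_cancel]

end signChar

section DualCode

variable {K ι : Type*} [Field K] [Fintype ι] [DecidableEq ι]

def dualCode (C : Submodule K (ι → K)) : Submodule K (ι → K) :=
  C.dualAnnihilator.comap (dotProductEquiv K ι).toLinearMap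

variable {C : Submodule K (ι → K)}

lemma mem_dualCode {w : ι → K} : w ∈ dualCode C ↔ ∀ v ∈ C, w ⬝ᵥ v = 0 := by
  simp [dualCode, Submodule.mem_dualAnnihilator]

lemma forall_mem_dualCode_dotProduct_eq_zero_iff {v : ι → K} :
    (∀ w ∈ dualCode C, w ⬝ᵥ v = 0) ↔ v ∈ C := by
  refine ⟨fun h => ?_, fun hv w hw => mem_dualCode.1 hw v hv⟩
  rw [← Subspace.forall_mem_dualAnnihilator_apply_eq_zero_iff]
  intro φ hφ
  have := h ((dotProductEquiv K ι).symm φ) (by simpa [dualCode] using hφ)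
  rwa [← dotProductEquiv_apply_apply, LinearEquiv.apply_symm_apply] at this

lemma natCard_mul_natCard_dualCode [Finite K] :
    Nat.card C * Nat.card (dualCode C) = Nat.card K ^ Fintype.card ι := by
  rw [Module.natCard_eq_pow_finrank (K := K) (V := C),
    Module.natCard_eq_pow_finrank (K := K) (V := dualCode C), dualCode, ← pow_add,
    ((dotProductEquiv K ι).ofSubmodule' C.dualAnnihilator).finrank_eq,
    Subspace.finrank_add_finrank_dualAnnihilator_eq, Module.finrank_fintype_fun_eq_card]

end DualCode

section BinaryCode

variable {ι : Type*} [Fintype ι] [DecidableEq ι] (C : Submodule (ZMod 2) (ι → ZMod 2))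
  [DecidablePred (· ∈ C)] [DecidablePred (· ∈ dualCode C)]

lemma sum_mem_signChar_dotProduct (w : ι → ZMod 2) :
    ∑ v ∈ univ with v ∈ C, signChar (w ⬝ᵥ v) =
      if w ∈ dualCode C then (Nat.card C : ℂ) else 0 :=
  (signChar.sum_filter_mem C (AddMonoidHom.mk' (w ⬝ᵥ ·) (dotProduct_add w))).trans
    (if_congr mem_dualCode.symm rfl rfl)

lemma sum_mem_dualCode_signChar_dotProduct (v : ι → ZMod 2) :
    ∑ w ∈ univ with w ∈ dualCode C, signChar (w ⬝ᵥ v) =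
      if v ∈ C then (Nat.card (dualCode C) : ℂ) else 0 :=
  (signChar.sum_filter_mem (dualCode C)
    (AddMonoidHom.mk' (· ⬝ᵥ v) fun a b => add_dotProduct a b v)).trans
    (if_congr forall_mem_dualCode_dotProduct_eq_zero_iff rfl rfl)

end BinaryCode

section Trigonometric

lemma cos_mul_ite_eq_sum_signChar {θ : ℝ} (hθ : Real.cos θ ≠ 0) (b : ZMod 2) :
    (Real.cos θ : ℂ) * (if b ≠ 0 then I * Real.tan θ else 1)
      = ∑ s : ZMod 2, signChar (s * b) * exp (θ * signChar s * I) / 2 := by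
  have hcos : Complex.cos θ ≠ 0 := mod_cast hθ
  rw [show (univ : Finset (ZMod 2)) = {0, 1} from rfl, sum_pair zero_ne_one]
  simp only [zero_mul, one_mul, AddChar.map_zero_eq_one, signChar.apply_eq_ite 1, one_ne_zero,
    if_false, mul_one, mul_neg_one, exp_mul_I, cos_neg, sin_neg, ofReal_cos, ofReal_tan,
    tan_eq_sin_div_cos, signChar.apply_eq_ite b]
  by_cases hb : b = 0
  · simp only [hb, ne_eq, not_true_eq_false, if_false, if_true]
    ring
  · simp only [hb, ne_eq, not_false_eq_true, if_false, if_true]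
    field_simp
    ring

variable {ι : Type*} [Fintype ι] [DecidableEq ι]

lemma cos_pow_mul_I_tan_pow_hammingNorm {θ : ℝ} (hθ : Real.cos θ ≠ 0) (u : ι → ZMod 2) :
    (Real.cos θ : ℂ) ^ Fintype.card ι * (I * Real.tan θ) ^ hammingNorm u
      = (∑ x : ι → ZMod 2, signChar (x ⬝ᵥ u) * exp (θ * (∑ j, signChar (x j)) * I))
        / 2 ^ Fintype.card ι := by
  have htan : (I * Real.tan θ : ℂ) ^ hammingNorm u =
      ∏ j, if u j ≠ 0 then I * Real.tan θ else 1 := by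
    rw [← prod_filter, prod_const]
    rfl
  rw [htan, ← card_univ, ← prod_const, ← prod_mul_distrib,
    prod_congr rfl fun j _ => cos_mul_ite_eq_sum_signChar hθ (u j), prod_univ_sum,
    Fintype.piFinset_univ, sum_div]
  refine sum_congr rfl fun x _ => ?_
  rw [prod_div_distrib, prod_mul_distrib, prod_const, card_univ, dotProduct, signChar.map_sum,
    ← Complex.exp_sum, ← sum_mul, ← mul_sum]

lemma cos_two_pi_div_two_pow_pos {l : ℕ} (hl : 3 ≤ l) :
    0 < Real.cos (2 * Real.pi / 2 ^ l) := by
  have h8 : (8 : ℝ) ≤ 2 ^ l := by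
    calc (8 : ℝ) = 2 ^ 3 := by norm_num
      _ ≤ 2 ^ l := pow_le_pow_right₀ (by norm_num) hl
  have hθ : 2 * Real.pi / 2 ^ l ≤ Real.pi / 4 := by
    rw [div_le_iff₀ (by positivity)]
    nlinarith [Real.pi_pos]
  apply Real.cos_pos_of_mem_Ioo
  constructor <;> linarith [Real.pi_pos, show 0 < 2 * Real.pi / 2 ^ l by positivity]

end Trigonometric

section Poisson

variable {ι : Type*} [Fintype ι] [DecidableEq ι] (C : Submodule (ZMod 2) (ι → ZMod 2))
  [DecidablePred (· ∈ C)] [DecidablePred (· ∈ dualCode C)] {θ : ℝ}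

lemma cos_pow_mul_sum_mem_eq_sum_mem_dualCode (hθ : Real.cos θ ≠ 0) (y ω : ι → ZMod 2) :
    (Real.cos θ : ℂ) ^ Fintype.card ι *
        ∑ v ∈ univ with v ∈ C, signChar (y ⬝ᵥ v) * (I * Real.tan θ) ^ hammingNorm (v + ω)
      = Nat.card C / 2 ^ Fintype.card ι * ∑ w ∈ univ with w ∈ dualCode C,
          signChar ((y + w) ⬝ᵥ ω) * exp (θ * (∑ j, signChar (y j + w j)) * I) := by
  set N : ℂ := 2 ^ Fintype.card ι
  set E : (ι → ZMod 2) → ℂ := fun x => exp (θ * (∑ j, signChar (x j)) * I)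
  have hexpand (u : ι → ZMod 2) :
      (Real.cos θ : ℂ) ^ Fintype.card ι * (I * Real.tan θ) ^ hammingNorm u
        = (∑ w, signChar ((y + w) ⬝ᵥ u) * E (y + w)) / N := by
    rw [cos_pow_mul_I_tan_pow_hammingNorm hθ]
    exact congrArg (· / N) (Fintype.sum_equiv (Equiv.addLeft y) _ _ fun _ => rfl).symm
  calc _ = ∑ v ∈ univ with v ∈ C,
          ∑ w, signChar ((y + w) ⬝ᵥ ω) * E (y + w) / N * signChar (w ⬝ᵥ v) := by
        rw [mul_sum]
        refine sum_congr rfl fun v _ => ?_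
        rw [mul_left_comm, hexpand, mul_div_assoc', mul_sum, sum_div]
        refine sum_congr rfl fun w _ => ?_
        rw [dotProduct_add, add_dotProduct, AddChar.map_add_eq_mul, AddChar.map_add_eq_mul]
        -- `ε_v` meets its own copy from the shift by `y`, and `ε_v² = 1`
        linear_combination (signChar (w ⬝ᵥ v) * signChar ((y + w) ⬝ᵥ ω) * E (y + w) / N) *
          signChar.mul_self (y ⬝ᵥ v)
    _ = ∑ w, signChar ((y + w) ⬝ᵥ ω) * E (y + w) / N *
          ∑ v ∈ univ with v ∈ C, signChar (w ⬝ᵥ v) := by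
        rw [sum_comm]
        simp_rw [mul_sum]
    _ = _ := by
        rw [mul_sum, sum_filter]
        refine sum_congr rfl fun w _ => ?_
        rw [sum_mem_signChar_dotProduct]
        split_ifs
        · change _ = _ / N * (_ * E (y + w))
          ring
        · rw [mul_zero]

lemma cos_pow_mul_sum_mem_eq_ite (hθ : Real.cos θ ≠ 0) {y : ι → ZMod 2}
    (hy : ∀ w ∈ dualCode C, ∑ j, signChar (y j + w j) = 0) (ω : ι → ZMod 2) :
    (Real.cos θ : ℂ) ^ Fintype.card ι *
        ∑ v ∈ univ with v ∈ C, signChar (y ⬝ᵥ v) * (I * Real.tan θ) ^ hammingNorm (v + ω)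
      = if ω ∈ C then signChar (y ⬝ᵥ ω) else 0 := by
  classical
  have hcard : (Nat.card C : ℂ) * Nat.card (dualCode C) = 2 ^ Fintype.card ι := by
    exact_mod_cast natCard_mul_natCard_dualCode.trans (by rw [Nat.card_zmod])
  calc _ = Nat.card C / 2 ^ Fintype.card ι * ∑ w ∈ univ with w ∈ dualCode C,
          signChar (y ⬝ᵥ ω) * signChar (w ⬝ᵥ ω) := by
        rw [cos_pow_mul_sum_mem_eq_sum_mem_dualCode C hθ]
        refine congrArg _ (sum_congr rfl fun w hw => ?_)
        rw [hy w (mem_filter.1 hw).2, mul_zero, zero_mul, exp_zero, mul_one, add_dotProduct,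
          AddChar.map_add_eq_mul]
    _ = _ := by
        rw [← mul_sum, sum_mem_dualCode_signChar_dotProduct]
        split_ifs
        · field_simp
          linear_combination signChar (y ⬝ᵥ ω) * hcard
        · rw [mul_zero, mul_zero]

end Poisson

namespace SimpleGraph

variable {V : Type*}

lemma Reachable.eq_of_forall_adj {G : SimpleGraph V} {β : Type*} {f : V → β}
    (hf : ∀ i j, G.Adj i j → f i = f j) {i j : V} (h : G.Reachable i j) : f i = f j := by
  rw [reachable_iff_reflTransGen] at h
  induction h with
  | refl => rfl
  | tail _ hadj ih => exact ih.trans (hf _ _ hadj)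

lemma sum_eq_zero_of_sum_reachable_eq_zero (G : SimpleGraph V) [Fintype V]
    [DecidableRel G.Reachable] {M : Type*} [AddCommMonoid M] {f : V → M}
    (h : ∀ i, ∑ j with G.Reachable i j, f j = 0) : ∑ j, f j = 0 := by
  classical
  rw [← sum_fiberwise univ G.connectedComponentMk f]
  refine sum_eq_zero fun c _ => ?_
  induction c using ConnectedComponent.ind with | h i => ?_
  rw [← h i]
  refine sum_congr (filter_congr fun j _ => ?_) fun _ _ => rfl
  rw [ConnectedComponent.eq, reachable_comm]

end SimpleGraph

section Graph

variable {ι : Type*} [Fintype ι] [DecidableEq ι] {B : Submodule (ZMod 2) (ι → ZMod 2)}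
  {G : SimpleGraph ι}

lemma apply_eq_of_reachable_of_mem_dualCode
    (hG : ∀ i j, G.Adj i j → Pi.single i 1 + Pi.single j 1 ∈ B) {w : ι → ZMod 2}
    (hw : w ∈ dualCode B) {i j : ι} (h : G.Reachable i j) : w i = w j :=
  h.eq_of_forall_adj fun a b hab => by
    have := mem_dualCode.1 hw _ (hG a b hab)
    rwa [dotProduct_add, dotProduct_single, dotProduct_single, mul_one, mul_one,
      CharTwo.add_eq_zero] at this

lemma sum_signChar_add_eq_zero_of_balanced
    (hG : ∀ i j, G.Adj i j → Pi.single i 1 + Pi.single j 1 ∈ B) {y : ι → ZMod 2}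
    (hbal : ∀ i, 2 * {j | G.Reachable i j ∧ y j ≠ 0}.ncard = {j | G.Reachable i j}.ncard)
    {w : ι → ZMod 2} (hw : w ∈ dualCode B) : ∑ j, signChar (y j + w j) = 0 := by
  classical
  refine G.sum_eq_zero_of_sum_reachable_eq_zero fun i => ?_
  calc ∑ j with G.Reachable i j, signChar (y j + w j)
      = (∑ j with G.Reachable i j, signChar (y j)) * signChar (w i) := by
        rw [sum_mul]
        refine sum_congr rfl fun j hj => ?_
        rw [AddChar.map_add_eq_mul,
          apply_eq_of_reachable_of_mem_dualCode hG hw (mem_filter.1 hj).2]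
    _ = 0 := by rw [signChar.sum_eq_zero_of_two_mul_ncard (hbal i), zero_mul]

end Graph

open scoped Classical in
theorem balanced_components_sufficient_general (m : ℕ) (y : Fin m → ZMod 2)
    (B : Submodule (ZMod 2) (Fin m → ZMod 2))
    (G : SimpleGraph (Fin m))
    (hG : ∀ i j, G.Adj i j ↔ i ≠ j ∧ (Pi.single i (1 : ZMod 2) + Pi.single j 1) ∈ B)
    (hcomp : ∀ i : Fin m,
      Even ({j | G.Reachable i j}.ncard) ∧
      2 * ({j | G.Reachable i j ∧ y j ≠ 0}.ncard) = {j | G.Reachable i j}.ncard) :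
    ∀ l : ℕ, 3 ≤ l →
      (∑ v ∈ Finset.univ.filter (fun v : Fin m → ZMod 2 => v ∈ B),
          (-1 : ℂ) ^ (y ⬝ᵥ v).val *
            (Complex.I * Real.tan (2 * Real.pi / 2 ^ l)) ^ hammingNorm v
        = ((Real.cos (2 * Real.pi / 2 ^ l) : ℂ))⁻¹ ^ m) ∧
      (∀ ω : Fin m → ZMod 2, ω ∉ B →
        ∑ v ∈ Finset.univ.filter (fun v : Fin m → ZMod 2 => v ∈ B),
            (-1 : ℂ) ^ (y ⬝ᵥ v).val *
              (Complex.I * Real.tan (2 * Real.pi / 2 ^ l)) ^ hammingNorm (v + ω)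
          = 0) := by
  intro l hl
  have hcos := (cos_two_pi_div_two_pow_pos hl).ne'
  have hy (w : Fin m → ZMod 2) (hw : w ∈ dualCode B) : ∑ j, signChar (y j + w j) = 0 :=
    sum_signChar_add_eq_zero_of_balanced (fun i j h => ((hG i j).1 h).2) (fun i => (hcomp i).2)
      hw
  have key := cos_pow_mul_sum_mem_eq_ite B hcos hy
  simp only [Fintype.card_fin, signChar.apply] at key
  refine ⟨?_, fun ω hω => ?_⟩
  · have h0 := key 0
    simp only [add_zero, zero_mem, if_true, dotProduct_zero, ZMod.val_zero, pow_zero] at h0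
    rw [inv_pow]
    exact eq_inv_of_mul_eq_one_right h0
  · exact (mul_eq_zero.1 ((key ω).trans (if_neg hω))).resolve_left
      (pow_ne_zero _ (mod_cast hcos))

open scoped Classical in
/-- sufficiency direction of Theorem 8, in coding-theoretic form.
Let `B ⊆ F₂^m` be a binary linear code with all codeword weights even, `ε_v = (−1)^{y·v}`
(extended to all of `F₂^m`), and let `G` be the graph on `{1,…,m}` with `i ~ j` iff `i ≠ j`
and `e_i + e_j ∈ B`. If every connected component of `G` has even size `N_k` (in particular
no isolated vertices) and `w_H(y|_{Γ_k}) = N_k/2` for each `k`, then for every `l ≥ 3`: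
(a) `Σ_{v∈B} ε_v (i tan(2π/2^l))^{w_H(v)} = (sec(2π/2^l))^m`, and
(b) `Σ_{v∈B} ε_v (i tan(2π/2^l))^{w_H(v+ω)} = 0` for every `ω ∈ F₂^m ∖ B`. -/
theorem balanced_components_sufficient (m : ℕ) (hm : 1 ≤ m) (y : Fin m → ZMod 2)
    (B : Submodule (ZMod 2) (Fin m → ZMod 2))
    (hev : ∀ v ∈ B, Even (hammingNorm v))
    (G : SimpleGraph (Fin m))
    (hG : ∀ i j, G.Adj i j ↔ i ≠ j ∧ (Pi.single i (1 : ZMod 2) + Pi.single j 1) ∈ B)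
    (hcomp : ∀ i : Fin m,
      Even ({j | G.Reachable i j}.ncard) ∧
      2 * ({j | G.Reachable i j ∧ y j ≠ 0}.ncard) = {j | G.Reachable i j}.ncard) :
    ∀ l : ℕ, 3 ≤ l →
      (∑ v ∈ Finset.univ.filter (fun v : Fin m → ZMod 2 => v ∈ B),
          (-1 : ℂ) ^ (y ⬝ᵥ v).val *
            (Complex.I * Real.tan (2 * Real.pi / 2 ^ l)) ^ hammingNorm v
        = ((Real.cos (2 * Real.pi / 2 ^ l) : ℂ))⁻¹ ^ m) ∧
      (∀ ω : Fin m → ZMod 2, ω ∉ B →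
        ∑ v ∈ Finset.univ.filter (fun v : Fin m → ZMod 2 => v ∈ B),
            (-1 : ℂ) ^ (y ⬝ᵥ v).val *
              (Complex.I * Real.tan (2 * Real.pi / 2 ^ l)) ^ hammingNorm (v + ω)
          = 0) :=
  balanced_components_sufficient_general m y B G hG hcomp
end

section
/- Let n ≥ 1 and let Γ₁, …, Γ_t ⊆ {1,…,n} be pairwise disjoint nonempty sets with union Γ. Let y ∈ F₂ⁿ satisfy 2·w_H(y|_{Γ_k}) = |Γ_k| for every k. Let C₂ ⊆ F₂ⁿ be a binary linear code such that every x ∈ C₂ vanishes outside Γ and is constant on each Γ_k (x|_{Γ_k} is all-zeros or all-ones), and let w ∈ F₂ⁿ be constant on each Γ_k. Then for every x ∈ C₂, w_H(w + x + y) = w_H((w + y)|_{{1,…,n}∖Γ}) + |Γ|/2; in particular w_H(w + x + y) is independent of x ∈ C₂, so the corresponding CSS code is a constant excitation code. If moreover w vanishes outside Γ, then w_H(w + x + y) = |Γ|/2 + w_H(y|_{{1,…,n}∖Γ}), which is independent of both w and x; hence for an error-detecting code the (constant) weights in different cosets of the X-stabilizers are identical. -/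
/-!
Adding a vector that is constant on a block `Γ_k` to `y` either keeps or complements `y` there,
and `y` is balanced on `Γ_k`, so `w + x + y` has exactly `|Γ_k|/2` nonzero coordinates in each
block, whatever `w` and `x` are. Outside `Γ` every `x ∈ C₂` vanishes, so there `w + x + y`
agrees with `w + y`.
-/

open Finset

lemma ZMod.one_add_ne_zero_iff (a : ZMod 2) : 1 + a ≠ 0 ↔ a = 0 := by
  revert a; decide

section Weights

variable {ι : Type*}

lemma const_on_add {s : Finset ι} {u v : ι → ZMod 2}
    (hu : (∀ i ∈ s, u i = 0) ∨ (∀ i ∈ s, u i = 1))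
    (hv : (∀ i ∈ s, v i = 0) ∨ (∀ i ∈ s, v i = 1)) :
    (∀ i ∈ s, (u + v) i = 0) ∨ (∀ i ∈ s, (u + v) i = 1) := by
  rcases hu with hu | hu <;> rcases hv with hv | hv <;> [left; right; right; left] <;>
    intro i hi <;> simp only [Pi.add_apply, hu i hi, hv i hi] <;> rfl

lemma two_mul_card_filter_add_ne_zero_of_balanced (s : Finset ι) (y z : ι → ZMod 2)
    (hy : 2 * #{i ∈ s | y i ≠ 0} = #s)
    (hz : (∀ i ∈ s, z i = 0) ∨ (∀ i ∈ s, z i = 1)) :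
    2 * #{i ∈ s | z i + y i ≠ 0} = #s := by
  rcases hz with hz | hz
  · rw [filter_congr fun i hi => by rw [hz i hi, zero_add]]
    exact hy
  · have hsplit := card_filter_add_card_filter_not (s := s) (p := fun i => y i ≠ 0)
    rw [filter_congr fun i hi => by rw [hz i hi, ZMod.one_add_ne_zero_iff, ← not_ne_iff]]
    omega

variable [DecidableEq ι]

lemma two_mul_card_filter_biUnion {κ : Type*} (S : Finset κ) (Γk : κ → Finset ι)
    (hdisj : (S : Set κ).PairwiseDisjoint Γk) (p : ι → Prop) [DecidablePred p]
    (hp : ∀ k ∈ S, 2 * #{i ∈ Γk k | p i} = #(Γk k)) :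
    2 * #{i ∈ S.biUnion Γk | p i} = #(S.biUnion Γk) := by
  rw [filter_biUnion, card_biUnion (hdisj.mono_on fun k _ => filter_subset _ _),
    card_biUnion hdisj, mul_sum]
  exact sum_congr rfl hp

variable [Fintype ι] {β : Type*} [Zero β] [DecidableEq β]

lemma hammingNorm_eq_card_compl_add_card (Γ : Finset ι) (v : ι → β) :
    hammingNorm v = #{i | i ∉ Γ ∧ v i ≠ 0} + #{i ∈ Γ | v i ≠ 0} := by
  rw [hammingNorm, ← card_filter_add_card_filter_not (p := (· ∈ Γ)), filter_filter,
    filter_filter, add_comm]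
  congr 2 <;> ext i <;> simp [and_comm]

lemma card_filter_compl_congr (Γ : Finset ι) {u v : ι → β} (h : ∀ i ∉ Γ, u i = v i) :
    #{i | i ∉ Γ ∧ u i ≠ 0} = #{i | i ∉ Γ ∧ v i ≠ 0} := by
  congr 1
  exact filter_congr fun i _ => and_congr_right fun hi => by rw [h i hi]

end Weights

theorem constant_excitation_weights_general (n t : ℕ)
    (Γk : Fin t → Finset (Fin n))
    (hdisj : ∀ k k', k ≠ k' → Disjoint (Γk k) (Γk k'))
    (Γ : Finset (Fin n)) (hΓ : Γ = Finset.univ.biUnion Γk)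
    (y : Fin n → ZMod 2)
    (hy : ∀ k, 2 * ((Γk k).filter fun i => y i ≠ 0).card = (Γk k).card)
    (C₂ : Submodule (ZMod 2) (Fin n → ZMod 2))
    (hC₂ : ∀ x ∈ C₂, (∀ i, i ∉ Γ → x i = 0) ∧
      ∀ k, (∀ i ∈ Γk k, x i = 0) ∨ (∀ i ∈ Γk k, x i = 1))
    (w : Fin n → ZMod 2)
    (hw : ∀ k, (∀ i ∈ Γk k, w i = 0) ∨ (∀ i ∈ Γk k, w i = 1)) :
    (∀ x ∈ C₂, hammingNorm (w + x + y)
      = (Finset.univ.filter fun i => i ∉ Γ ∧ (w + y) i ≠ 0).card + Γ.card / 2) ∧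
    ((∀ i, i ∉ Γ → w i = 0) → ∀ x ∈ C₂, hammingNorm (w + x + y)
      = Γ.card / 2 + (Finset.univ.filter fun i => i ∉ Γ ∧ y i ≠ 0).card) := by
  have weight : ∀ x ∈ C₂, hammingNorm (w + x + y)
      = #{i | i ∉ Γ ∧ (w + y) i ≠ 0} + Γ.card / 2 := by
    intro x hx
    have inside : 2 * #{i ∈ Γ | (w + x + y) i ≠ 0} = #Γ := by
      subst hΓ
      exact two_mul_card_filter_biUnion _ _ (fun k _ k' _ => hdisj k k') _ fun k _ =>
        two_mul_card_filter_add_ne_zero_of_balanced _ y _ (hy k)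
          (const_on_add (hw k) ((hC₂ x hx).2 k))
    have outside := card_filter_compl_congr Γ (u := w + x + y) (v := w + y)
      fun i hi => by simp [(hC₂ x hx).1 i hi]
    rw [hammingNorm_eq_card_compl_add_card Γ, outside]
    omega
  refine ⟨weight, fun hw0 x hx => ?_⟩
  rw [weight x hx, card_filter_compl_congr Γ (v := y) fun i hi => by simp [hw0 i hi], add_comm]

/-- Corollary 9 of the paper, combinatorial form. Let `Γ₁, …, Γ_t` be
pairwise disjoint nonempty subsets of `{1,…,n}` with union `Γ`, let `y` be balanced on each
`Γ_k` (`2·w_H(y|_{Γ_k}) = |Γ_k|`), let every `x ∈ C₂` vanish outside `Γ` and be constant on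
each `Γ_k`, and let `w` be constant on each `Γ_k`. Then for every `x ∈ C₂`,
`w_H(w + x + y) = w_H((w + y)|_{Γᶜ}) + |Γ|/2`, independent of `x` (so the CSS code is a
constant excitation code); and if moreover `w` vanishes outside `Γ`, then
`w_H(w + x + y) = |Γ|/2 + w_H(y|_{Γᶜ})`, independent of both `w` and `x`. -/
theorem constant_excitation_weights (n t : ℕ) (hn : 1 ≤ n)
    (Γk : Fin t → Finset (Fin n))
    (hdisj : ∀ k k', k ≠ k' → Disjoint (Γk k) (Γk k'))
    (hne : ∀ k, (Γk k).Nonempty)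
    (Γ : Finset (Fin n)) (hΓ : Γ = Finset.univ.biUnion Γk)
    (y : Fin n → ZMod 2)
    (hy : ∀ k, 2 * ((Γk k).filter fun i => y i ≠ 0).card = (Γk k).card)
    (C₂ : Submodule (ZMod 2) (Fin n → ZMod 2))
    (hC₂ : ∀ x ∈ C₂, (∀ i, i ∉ Γ → x i = 0) ∧
      ∀ k, (∀ i ∈ Γk k, x i = 0) ∨ (∀ i ∈ Γk k, x i = 1))
    (w : Fin n → ZMod 2)
    (hw : ∀ k, (∀ i ∈ Γk k, w i = 0) ∨ (∀ i ∈ Γk k, w i = 1)) :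
    (∀ x ∈ C₂, hammingNorm (w + x + y)
      = (Finset.univ.filter fun i => i ∉ Γ ∧ (w + y) i ≠ 0).card + Γ.card / 2) ∧
    ((∀ i, i ∉ Γ → w i = 0) → ∀ x ∈ C₂, hammingNorm (w + x + y)
      = Γ.card / 2 + (Finset.univ.filter fun i => i ∉ Γ ∧ y i ≠ 0).card) :=
  constant_excitation_weights_general n t Γk hdisj Γ hΓ y hy C₂ hC₂ w hw
end

section
/- Let n, r, l be integers with 0 ≤ l ≤ r < n. Let A ∈ F₂^{(r−l)×n} have full row rank, let B ∈ F₂^{(r−l)×n}, let C ∈ F₂^{l×n} have full row rank, and let S ⊆ F₂^{2n} be the row space of the matrix with rows (A | B) and (0 | C). Assume S is self-orthogonal under the symplectic inner product, dim S = r, and the rows (0 | C) span S ∩ ({0} × F₂ⁿ). For an even integer M ≥ 2, let S′ ⊆ F₂^{2nM} be the row space of the matrix with row blocks (A⊗1_M | B⊗e₁), (0 | C⊗e₁), and (0 | Iₙ⊗W_M). Then S′ is self-orthogonal with S′ ≠ S′^{⊥s}, and the minimum distances satisfy d(S) ≤ d(S′) ≤ M·d(S). -/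
open Matrix Finset

/-- Symplectic weight of `(x,y) ∈ F₂^ι × F₂^ι`: the number of indices `i` with
`(x_i, y_i) ≠ (0,0)`. -/
def sympWeight {ι : Type*} [Fintype ι] (p : (ι → ZMod 2) × (ι → ZMod 2)) : ℕ :=
  (Finset.univ.filter fun i => p.1 i ≠ 0 ∨ p.2 i ≠ 0).card

/-- Symplectic inner product `⟨(a,b),(c,d)⟩_s = a·d + b·c` over `F₂`. -/
def sympInner {ι : Type*} [Fintype ι] (p q : (ι → ZMod 2) × (ι → ZMod 2)) : ZMod 2 :=
  p.1 ⬝ᵥ q.2 + p.2 ⬝ᵥ q.1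

/-- Symplectic dual `S^{⊥s}` of a subspace `S ⊆ F₂^{2n}`. -/
def sympPerp {ι : Type*} [Fintype ι]
    (S : Submodule (ZMod 2) ((ι → ZMod 2) × (ι → ZMod 2))) :
    Set ((ι → ZMod 2) × (ι → ZMod 2)) :=
  {u | ∀ s ∈ S, sympInner u s = 0}

/-- Minimum distance `d(S) = min { sw(u) : u ∈ S^{⊥s} ∖ S }` of the stabilizer code attached
to a self-orthogonal `S` with `S ≠ S^{⊥s}`. -/
noncomputable def minDistance {ι : Type*} [Fintype ι]
    (S : Submodule (ZMod 2) ((ι → ZMod 2) × (ι → ZMod 2))) : ℕ :=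
  sInf (sympWeight '' (sympPerp S \ (S : Set ((ι → ZMod 2) × (ι → ZMod 2)))))


/-!
Let `L (x, y) = (x ⊗ 1_M, y ⊗ e₁)` and let `Π (x', y')` consist of the first column of `x'` and the
block sums `Σ y'`, so that `Π ∘ L = id`. Whenever the `X`-parts of `u'` and `v'` are constant on
blocks, `⟨u', v'⟩_s = ⟨Π u', Π v'⟩_s`. The rows `Iₙ ⊗ W_M` span `{0} × ker Σ`, hence
`S' = L S + {0} × ker Σ` is the set of `u'` with block-constant `X`-part and `Π u' ∈ S`. Pairing
with `{0} × ker Σ` forces block constancy, so `S'^{⊥s}` is the same set with `S^{⊥s}` in place of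
`S`, and `S'^{⊥s} \ S'` consists of lifts of `S^{⊥s} \ S`. Now `Π` does not increase the
symplectic weight and `L` multiplies it by at most `M`. Finally `S^{⊥s} \ S` is nonempty since
`dim S^{⊥s} = 2n - r > r`.
-/

section SymplecticForm

variable {ι : Type*} [Fintype ι]

lemma sympInner_comm (u v : (ι → ZMod 2) × (ι → ZMod 2)) : sympInner u v = sympInner v u := by
  rw [sympInner, sympInner, dotProduct_comm u.1, dotProduct_comm u.2, add_comm]

def sympForm : LinearMap.BilinForm (ZMod 2) ((ι → ZMod 2) × (ι → ZMod 2)) :=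
  LinearMap.mk₂ (ZMod 2) sympInner
    (fun _ _ _ => by simp only [sympInner, Prod.fst_add, Prod.snd_add, add_dotProduct]; ring)
    (fun _ _ _ => by
      simp only [sympInner, Prod.smul_fst, Prod.smul_snd, smul_dotProduct, smul_add])
    (fun _ _ _ => by simp only [sympInner, Prod.fst_add, Prod.snd_add, dotProduct_add]; ring)
    (fun _ _ _ => by
      simp only [sympInner, Prod.smul_fst, Prod.smul_snd, dotProduct_smul, smul_add])

lemma sympForm_isRefl : (sympForm (ι := ι)).IsRefl := fun u v h => by
  simp only [sympForm, LinearMap.mk₂_apply] at h ⊢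
  rwa [sympInner_comm]

lemma sympForm_nondegenerate : (sympForm (ι := ι)).Nondegenerate := by
  classical
  refine (LinearMap.IsRefl.nondegenerate_iff_separatingLeft sympForm_isRefl).2 fun u hu => ?_
  ext i
  · simpa [sympForm, sympInner] using hu (0, Pi.single i 1)
  · simpa [sympForm, sympInner] using hu (Pi.single i 1, 0)

lemma coe_orthogonal_sympForm (S : Submodule (ZMod 2) ((ι → ZMod 2) × (ι → ZMod 2))) :
    (sympForm.orthogonal S : Set ((ι → ZMod 2) × (ι → ZMod 2))) = sympPerp S := by
  ext u
  simp [LinearMap.BilinForm.mem_orthogonal_iff, sympForm, sympPerp, sympInner_comm _ u]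

lemma sympPerp_diff_nonempty (S : Submodule (ZMod 2) ((ι → ZMod 2) × (ι → ZMod 2)))
    (hS : Module.finrank (ZMod 2) S < Fintype.card ι) :
    (sympPerp S \ (S : Set ((ι → ZMod 2) × (ι → ZMod 2)))).Nonempty := by
  rw [Set.sdiff_nonempty, ← coe_orthogonal_sympForm, SetLike.coe_subset_coe]
  intro hle
  have hrank := Submodule.finrank_mono hle
  rw [LinearMap.BilinForm.finrank_orthogonal sympForm_nondegenerate, Module.finrank_prod,
    Module.finrank_fintype_fun_eq_card] at hrank
  omega

lemma even_hammingNorm_iff_sum_eq_zero (w : ι → ZMod 2) :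
    Even (hammingNorm w) ↔ ∑ i, w i = 0 := by
  have hbool : ∀ a : ZMod 2, a = if a ≠ 0 then 1 else 0 := by decide
  rw [← ZMod.natCast_eq_zero_iff_even, hammingNorm, Fintype.sum_congr _ _ fun i => hbool (w i),
    Finset.sum_boole]

end SymplecticForm

section BlockMaps

variable {R : Type*} [CommSemiring R] {ι : Type*} {M : ℕ}

/-- `x ↦ x ⊗ 1_M`. -/
@[simps]
def tensorOnes : (ι → R) →ₗ[R] (ι × Fin M → R) where
  toFun x p := x p.1
  map_add' _ _ := rfl
  map_smul' _ _ := rfl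

/-- `y ↦ y ⊗ e₁`. -/
@[simps]
def tensorE1 : (ι → R) →ₗ[R] (ι × Fin M → R) where
  toFun y p := y p.1 * if (p.2 : ℕ) = 0 then 1 else 0
  map_add' _ _ := funext fun _ => add_mul _ _ _
  map_smul' _ _ := funext fun _ => mul_assoc _ _ _

@[simps]
def blockSum : (ι × Fin M → R) →ₗ[R] (ι → R) where
  toFun y j := ∑ m, y (j, m)
  map_add' _ _ := by ext; simp [Finset.sum_add_distrib]
  map_smul' _ _ := by ext; simp [Finset.mul_sum]

@[simps]
def rowEmbed [DecidableEq ι] (j : ι) : (Fin M → R) →ₗ[R] (ι × Fin M → R) where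
  toFun w p := if p.1 = j then w p.2 else 0
  map_add' _ _ := by ext; split_ifs <;> simp_all
  map_smul' _ _ := by ext; split_ifs <;> simp_all

lemma blockSum_single [DecidableEq ι] (p : ι × Fin M) (c : R) :
    blockSum (Pi.single p c) = Pi.single p.1 c := by
  ext j
  rcases eq_or_ne j p.1 with rfl | hj
  · simp [Pi.single_apply, Prod.ext_iff]
  · simp [Prod.ext_iff, hj]

lemma blockSum_rowEmbed [DecidableEq ι] (j : ι) (w : Fin M → R) :
    blockSum (rowEmbed j w) = Pi.single j (∑ m, w m) := by
  ext i
  rcases eq_or_ne i j with rfl | hij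
  · simp
  · simp [hij]

lemma sum_rowEmbed [Fintype ι] [DecidableEq ι] (y : ι × Fin M → R) :
    ∑ j, rowEmbed j (fun m => y (j, m)) = y := by
  ext p
  simp [Finset.sum_apply]

lemma tensorOnes_dotProduct [Fintype ι] (x : ι → R) (y : ι × Fin M → R) :
    tensorOnes x ⬝ᵥ y = x ⬝ᵥ blockSum y := by
  simp [dotProduct, Fintype.sum_prod_type, Finset.mul_sum]

lemma dotProduct_tensorOnes [Fintype ι] (y : ι × Fin M → R) (x : ι → R) :
    y ⬝ᵥ tensorOnes x = blockSum y ⬝ᵥ x := by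
  rw [dotProduct_comm, tensorOnes_dotProduct, dotProduct_comm]

lemma span_rowEmbed_eq_ker_blockSum [Fintype ι] [DecidableEq ι] {κ : Type*}
    {W : κ → Fin M → R} (hW : ∀ w, w ∈ Submodule.span R (Set.range W) ↔ ∑ m, w m = 0) :
    Submodule.span R (Set.range fun q : ι × κ => rowEmbed q.1 (W q.2)) =
      LinearMap.ker (blockSum (ι := ι)) := by
  apply le_antisymm
  · rw [Submodule.span_le]
    rintro _ ⟨q, rfl⟩
    rw [SetLike.mem_coe, LinearMap.mem_ker, blockSum_rowEmbed,
      (hW _).1 (Submodule.subset_span ⟨q.2, rfl⟩), Pi.single_zero]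
  · intro y hy
    rw [← sum_rowEmbed y]
    refine Submodule.sum_mem _ fun j _ => ?_
    have hrow : (fun m => y (j, m)) ∈ Submodule.span R (Set.range W) :=
      (hW _).2 (congrFun (LinearMap.mem_ker.1 hy) j)
    have hmap := Submodule.mem_map_of_mem (f := rowEmbed j) hrow
    rw [Submodule.map_span] at hmap
    refine Submodule.span_mono ?_ hmap
    rintro _ ⟨_, ⟨k, rfl⟩, rfl⟩
    exact ⟨(j, k), rfl⟩

def liftPair : (ι → R) × (ι → R) →ₗ[R] (ι × Fin M → R) × (ι × Fin M → R) :=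
  tensorOnes.prodMap tensorE1

variable [NeZero M]

@[simps]
def firstColumn : (ι × Fin M → R) →ₗ[R] (ι → R) where
  toFun x j := x (j, 0)
  map_add' _ _ := rfl
  map_smul' _ _ := rfl

def projPair : (ι × Fin M → R) × (ι × Fin M → R) →ₗ[R] (ι → R) × (ι → R) :=
  firstColumn.prodMap blockSum

lemma firstColumn_tensorOnes (x : ι → R) : firstColumn (tensorOnes (M := M) x) = x := rfl

lemma blockSum_tensorE1 (y : ι → R) : blockSum (tensorE1 (M := M) y) = y := by
  ext j
  simp [Fin.val_eq_zero_iff]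

lemma projPair_liftPair (v : (ι → R) × (ι → R)) : projPair (liftPair (M := M) v) = v :=
  Prod.ext (firstColumn_tensorOnes v.1) (blockSum_tensorE1 v.2)

/-- `S'` and `S'^{⊥s}` are the block extensions of `S` and `S^{⊥s}`. -/
def blockExtension (X : Set ((ι → R) × (ι → R))) : Set ((ι × Fin M → R) × (ι × Fin M → R)) :=
  {u | u.1 ∈ Set.range tensorOnes} ∩ projPair ⁻¹' X

lemma blockExtension_mono {X Y : Set ((ι → R) × (ι → R))} (h : X ⊆ Y) :
    blockExtension (M := M) X ⊆ blockExtension Y :=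
  Set.inter_subset_inter_right _ (Set.preimage_mono h)

lemma blockExtension_diff (X Y : Set ((ι → R) × (ι → R))) :
    blockExtension (M := M) X \ blockExtension Y = blockExtension (X \ Y) := by
  rw [blockExtension, blockExtension, blockExtension, Set.preimage_sdiff,
    Set.inter_sdiff_distrib_left]

lemma liftPair_mem_blockExtension {X : Set ((ι → R) × (ι → R))} {v : (ι → R) × (ι → R)}
    (hv : v ∈ X) : liftPair v ∈ blockExtension (M := M) X :=
  ⟨⟨v.1, rfl⟩, by rwa [Set.mem_preimage, projPair_liftPair]⟩

end BlockMaps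

section BlockMapsRing

variable {R : Type*} [CommRing R] {ι : Type*} {M : ℕ} [NeZero M]

lemma mem_range_tensorOnes_of_dotProduct_eq_zero [Fintype ι] [DecidableEq ι]
    {x : ι × Fin M → R} (hx : ∀ k ∈ LinearMap.ker (blockSum (ι := ι)), x ⬝ᵥ k = 0) :
    x ∈ LinearMap.range (tensorOnes (R := R)) := by
  refine ⟨firstColumn x, funext fun p => ?_⟩
  have hk : (Pi.single p 1 - Pi.single (p.1, 0) 1 : ι × Fin M → R) ∈ LinearMap.ker blockSum := by
    simp [blockSum_single]
  have hxk := hx _ hk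
  rw [dotProduct_sub, dotProduct_single, dotProduct_single, sub_eq_zero] at hxk
  simpa using hxk.symm

lemma coe_map_liftPair_sup_map_inr_ker_blockSum (S : Submodule R ((ι → R) × (ι → R))) :
    (↑(S.map (liftPair (M := M)) ⊔ (LinearMap.ker (blockSum (M := M))).map (LinearMap.inr R _ _)) :
      Set ((ι × Fin M → R) × (ι × Fin M → R))) = blockExtension (S : Set ((ι → R) × (ι → R))) := by
  ext u
  simp only [SetLike.mem_coe, Submodule.mem_sup, Submodule.mem_map, LinearMap.mem_ker]
  constructor
  · rintro ⟨_, ⟨s, hs, rfl⟩, _, ⟨k, hk, rfl⟩, rfl⟩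
    refine ⟨⟨s.1, by simp [liftPair]⟩, ?_⟩
    have hk' : projPair (LinearMap.inr R _ _ k) = 0 := by simp [projPair, hk]
    rwa [Set.mem_preimage, map_add, hk', add_zero, projPair_liftPair]
  · rintro ⟨⟨x, hx⟩, hu⟩
    refine ⟨_, ⟨projPair u, hu, rfl⟩, _, ⟨u.2 - tensorE1 (blockSum u.2), ?_, rfl⟩, ?_⟩
    · rw [map_sub, blockSum_tensorE1, sub_self]
    · ext p
      · simp [liftPair, projPair, ← hx]
      · simp [liftPair, projPair]

end BlockMapsRing
section SymplecticLift

variable {ι : Type*} [Fintype ι] {M : ℕ} [NeZero M]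

lemma sympInner_projPair {u v : (ι × Fin M → ZMod 2) × (ι × Fin M → ZMod 2)}
    (hu : u.1 ∈ Set.range tensorOnes) (hv : v.1 ∈ Set.range tensorOnes) :
    sympInner (projPair u) (projPair v) = sympInner u v := by
  obtain ⟨x, hx⟩ := hu
  obtain ⟨y, hy⟩ := hv
  simp only [sympInner, projPair, LinearMap.prodMap_apply, ← hx, ← hy, firstColumn_tensorOnes,
    tensorOnes_dotProduct, dotProduct_tensorOnes]

lemma sympPerp_eq_blockExtension {S : Submodule (ZMod 2) ((ι → ZMod 2) × (ι → ZMod 2))}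
    {T : Submodule (ZMod 2) ((ι × Fin M → ZMod 2) × (ι × Fin M → ZMod 2))}
    (hT : (T : Set ((ι × Fin M → ZMod 2) × (ι × Fin M → ZMod 2))) =
      blockExtension (S : Set ((ι → ZMod 2) × (ι → ZMod 2)))) :
    sympPerp T = blockExtension (sympPerp S) := by
  ext u
  constructor
  · intro hu
    have hconst : u.1 ∈ Set.range tensorOnes := by
      classical
      refine mem_range_tensorOnes_of_dotProduct_eq_zero fun k hk => ?_
      have hkT : LinearMap.inr (ZMod 2) _ _ k ∈ T := by
        rw [← SetLike.mem_coe, hT]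
        refine ⟨⟨0, map_zero _⟩, ?_⟩
        simp [projPair, LinearMap.mem_ker.1 hk, Prod.mk_zero_zero]
      simpa [sympInner] using hu _ hkT
    refine ⟨hconst, fun s hs => ?_⟩
    have hsT : liftPair s ∈ T := by
      rw [← SetLike.mem_coe, hT]
      exact liftPair_mem_blockExtension hs
    rw [← projPair_liftPair (M := M) s, sympInner_projPair hconst ⟨s.1, rfl⟩]
    exact hu _ hsT
  · rintro ⟨hconst, hu⟩ t ht
    rw [← SetLike.mem_coe, hT] at ht
    rw [← sympInner_projPair hconst ht.1]
    exact hu _ ht.2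

end SymplecticLift

section Weight

variable {ι : Type*} [Fintype ι] {M : ℕ}

lemma sympWeight_projPair_le [NeZero M] (u : (ι × Fin M → ZMod 2) × (ι × Fin M → ZMod 2)) :
    sympWeight (projPair u) ≤ sympWeight u := by
  classical
  unfold sympWeight
  refine (card_le_card fun j hj => ?_).trans
    (card_image_le (s := univ.filter fun p => u.1 p ≠ 0 ∨ u.2 p ≠ 0) (f := Prod.fst))
  simp only [projPair, LinearMap.prodMap_apply, firstColumn_apply, blockSum_apply, mem_filter,
    mem_univ, true_and, mem_image] at hj ⊢
  rcases hj with h | h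
  · exact ⟨(j, 0), Or.inl h, rfl⟩
  · obtain ⟨m, -, hm⟩ := exists_ne_zero_of_sum_ne_zero h
    exact ⟨(j, m), Or.inr hm, rfl⟩

lemma sympWeight_liftPair_le (v : (ι → ZMod 2) × (ι → ZMod 2)) :
    sympWeight (liftPair (M := M) v) ≤ M * sympWeight v := by
  unfold sympWeight
  refine (card_le_card (t := (univ.filter fun j => v.1 j ≠ 0 ∨ v.2 j ≠ 0) ×ˢ univ)
    fun p hp => ?_).trans_eq (by rw [card_product, card_univ, Fintype.card_fin, mul_comm])
  simp only [liftPair, LinearMap.prodMap_apply, tensorOnes_apply, tensorE1_apply, mem_filter,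
    mem_univ, true_and, mem_product, and_true] at hp ⊢
  exact hp.imp_right left_ne_zero_of_mul

lemma sInf_sympWeight_le_blockExtension [NeZero M] {D : Set ((ι → ZMod 2) × (ι → ZMod 2))}
    (hD : D.Nonempty) :
    sInf (sympWeight '' D) ≤ sInf (sympWeight '' blockExtension (M := M) D) := by
  obtain ⟨v, hv⟩ := hD
  have hD' : (blockExtension (M := M) D).Nonempty := ⟨_, liftPair_mem_blockExtension hv⟩
  obtain ⟨u, hu, hw⟩ := Nat.sInf_mem (hD'.image sympWeight)
  rw [← hw]
  calc sInf (sympWeight '' D) ≤ sympWeight (projPair u) :=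
        Nat.sInf_le (Set.mem_image_of_mem sympWeight (show projPair u ∈ D from hu.2))
    _ ≤ sympWeight u := sympWeight_projPair_le u

lemma sInf_sympWeight_blockExtension_le [NeZero M] {D : Set ((ι → ZMod 2) × (ι → ZMod 2))}
    (hD : D.Nonempty) :
    sInf (sympWeight '' blockExtension (M := M) D) ≤ M * sInf (sympWeight '' D) := by
  obtain ⟨v, hv, hw⟩ := Nat.sInf_mem (hD.image sympWeight)
  rw [← hw]
  calc sInf (sympWeight '' blockExtension D) ≤ sympWeight (liftPair (M := M) v) :=
        Nat.sInf_le (Set.mem_image_of_mem sympWeight (liftPair_mem_blockExtension hv))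
    _ ≤ M * sympWeight v := sympWeight_liftPair_le v

end Weight

theorem product_construction_distance_general (n r l : ℕ) (hrn : r < n)
    (M : ℕ) (hM : 2 ≤ M)
    (A B : Fin (r - l) → Fin n → ZMod 2) (C : Fin l → Fin n → ZMod 2)
    (S : Submodule (ZMod 2) ((Fin n → ZMod 2) × (Fin n → ZMod 2)))
    (hS : S = Submodule.span (ZMod 2)
      (Set.range (fun i => (A i, B i)) ∪
       Set.range (fun i => ((0 : Fin n → ZMod 2), C i))))
    (hself : ∀ u ∈ S, ∀ v ∈ S, sympInner u v = 0)
    (hdim : Module.finrank (ZMod 2) S = r)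
    (W : Fin (M - 1) → Fin M → ZMod 2)
    (hW : (Submodule.span (ZMod 2) (Set.range W) : Set (Fin M → ZMod 2))
      = {w | Even (hammingNorm w)})
    (S' : Submodule (ZMod 2) ((Fin n × Fin M → ZMod 2) × (Fin n × Fin M → ZMod 2)))
    (hS' : S' = Submodule.span (ZMod 2)
      (Set.range (fun i => ((fun p : Fin n × Fin M => A i p.1),
          fun p : Fin n × Fin M => B i p.1 * (if (p.2 : ℕ) = 0 then 1 else 0))) ∪
       Set.range (fun i => ((0 : Fin n × Fin M → ZMod 2),
          fun p : Fin n × Fin M => C i p.1 * (if (p.2 : ℕ) = 0 then 1 else 0))) ∪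
       Set.range (fun q : Fin n × Fin (M - 1) => ((0 : Fin n × Fin M → ZMod 2),
          fun p : Fin n × Fin M => if p.1 = q.1 then W q.2 p.2 else 0)))) :
    (∀ u ∈ S', ∀ v ∈ S', sympInner u v = 0) ∧
    (S' : Set ((Fin n × Fin M → ZMod 2) × (Fin n × Fin M → ZMod 2))) ≠ sympPerp S' ∧
    minDistance S ≤ minDistance S' ∧ minDistance S' ≤ M * minDistance S := by
  have : NeZero M := ⟨by omega⟩
  have hWsum : ∀ w, w ∈ Submodule.span (ZMod 2) (Set.range W) ↔ ∑ m, w m = 0 := fun w =>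
    (Set.ext_iff.1 hW w).trans (even_hammingNorm_iff_sum_eq_zero w)
  have hS'S : (S' : Set ((Fin n × Fin M → ZMod 2) × (Fin n × Fin M → ZMod 2))) =
      blockExtension (S : Set ((Fin n → ZMod 2) × (Fin n → ZMod 2))) := by
    rw [← coe_map_liftPair_sup_map_inr_ker_blockSum, ← span_rowEmbed_eq_ker_blockSum hWsum, hS',
      hS, Submodule.map_span, Submodule.map_span, ← Submodule.span_union, Set.image_union,
      ← Set.range_comp, ← Set.range_comp, ← Set.range_comp]
    -- the generators in `hS'` are, definitionally, `liftPair (A i, B i)`, `liftPair (0, C i)`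
    -- and `inr (rowEmbed j (W k))`
    rfl
  have hperp : sympPerp S' = blockExtension (sympPerp S) := sympPerp_eq_blockExtension hS'S
  have hD : (sympPerp S \ (S : Set ((Fin n → ZMod 2) × (Fin n → ZMod 2)))).Nonempty :=
    sympPerp_diff_nonempty S (by simpa [hdim])
  have hS'D : sympPerp S' \ (S' : Set ((Fin n × Fin M → ZMod 2) × (Fin n × Fin M → ZMod 2))) =
      blockExtension (sympPerp S \ (S : Set ((Fin n → ZMod 2) × (Fin n → ZMod 2)))) := by
    rw [hperp, hS'S, blockExtension_diff]
  refine ⟨fun u hu => ?_, fun h => ?_, ?_, ?_⟩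
  · rw [← SetLike.mem_coe, hS'S] at hu
    exact (hperp ▸ blockExtension_mono hself hu :)
  · obtain ⟨v, hv⟩ := hD
    have hv' := liftPair_mem_blockExtension (M := M) hv
    rw [← hS'D, ← h] at hv'
    exact hv'.2 hv'.1
  · rw [minDistance, minDistance, hS'D]
    exact sInf_sympWeight_le_blockExtension hD
  · rw [minDistance, minDistance, hS'D]
    exact sInf_sympWeight_blockExtension_le hD

/-- Theorem 10 of the paper. Given a stabilizer code with binary symplectic
generator matrix `[A | B ; 0 | C]` (with `A`, `C` of full row rank, `S` self-orthogonal of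
dimension `r`, and the rows `(0|C)` spanning `S ∩ ({0} × F₂ⁿ)`), and even `M ≥ 2`, the code
`S′` generated by `(A⊗1_M | B⊗e₁)`, `(0 | C⊗e₁)`, and `(0 | Iₙ⊗W_M)` is self-orthogonal with
`S′ ≠ S′^{⊥s}`, and `d(S) ≤ d(S′) ≤ M·d(S)`. -/
theorem product_construction_distance (n r l : ℕ) (hlr : l ≤ r) (hrn : r < n)
    (M : ℕ) (hM : 2 ≤ M) (hMeven : Even M)
    (A B : Fin (r - l) → Fin n → ZMod 2) (C : Fin l → Fin n → ZMod 2)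
    (hA : LinearIndependent (ZMod 2) A) (hC : LinearIndependent (ZMod 2) C)
    (S : Submodule (ZMod 2) ((Fin n → ZMod 2) × (Fin n → ZMod 2)))
    (hS : S = Submodule.span (ZMod 2)
      (Set.range (fun i => (A i, B i)) ∪
       Set.range (fun i => ((0 : Fin n → ZMod 2), C i))))
    (hself : ∀ u ∈ S, ∀ v ∈ S, sympInner u v = 0)
    (hdim : Module.finrank (ZMod 2) S = r)
    (hker : {p | p ∈ S ∧ p.1 = 0}
      = (Submodule.span (ZMod 2)
          (Set.range fun i => ((0 : Fin n → ZMod 2), C i)) :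
            Set ((Fin n → ZMod 2) × (Fin n → ZMod 2))))
    (W : Fin (M - 1) → Fin M → ZMod 2)
    (hW : (Submodule.span (ZMod 2) (Set.range W) : Set (Fin M → ZMod 2))
      = {w | Even (hammingNorm w)})
    (S' : Submodule (ZMod 2) ((Fin n × Fin M → ZMod 2) × (Fin n × Fin M → ZMod 2)))
    (hS' : S' = Submodule.span (ZMod 2)
      (Set.range (fun i => ((fun p : Fin n × Fin M => A i p.1),
          fun p : Fin n × Fin M => B i p.1 * (if (p.2 : ℕ) = 0 then 1 else 0))) ∪
       Set.range (fun i => ((0 : Fin n × Fin M → ZMod 2),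
          fun p : Fin n × Fin M => C i p.1 * (if (p.2 : ℕ) = 0 then 1 else 0))) ∪
       Set.range (fun q : Fin n × Fin (M - 1) => ((0 : Fin n × Fin M → ZMod 2),
          fun p : Fin n × Fin M => if p.1 = q.1 then W q.2 p.2 else 0)))) :
    (∀ u ∈ S', ∀ v ∈ S', sympInner u v = 0) ∧
    (S' : Set ((Fin n × Fin M → ZMod 2) × (Fin n × Fin M → ZMod 2))) ≠ sympPerp S' ∧
    minDistance S ≤ minDistance S' ∧ minDistance S' ≤ M * minDistance S :=
  product_construction_distance_general n r l hrn M hM A B C S hS hself hdim W hW S' hS'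
end

section
/- Let m ≥ 1, let W = {v ∈ F₂^m : w_H(v) is even} be the even-weight (single-parity-check) code of length m, let y ∈ F₂^m, let l ≥ 3 be an integer, and set γ = 2π(m − 2·w_H(y))/2^l ∈ ℝ. Then Σ_{v∈W} (−1)^{y·v} (i tan(2π/2^l))^{w_H(v)} = cos(γ) · (sec(2π/2^l))^m. -/
open Matrix Finset

/-!
Summing over all of `F₂^n` instead of `W`, the signed weight enumerator factors over the
coordinates: `∑_v (-1)^{y·v} c^{w(v)} = (1 + c)^{n - w(y)} (1 - c)^{w(y)}`. The even-weight part
is the average of this at `c` and `-c`. For `c = i tan θ` one has `1 ± c = e^{± iθ} / cos θ`, so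
the two values are `e^{± i(n - 2w(y))θ} / cos^n θ`, whose average is `cos((n - 2w(y))θ) / cos^n θ`.
-/

section ParityCharacter

variable {R : Type*} [CommRing R]

lemma ZMod.neg_one_pow_val_add (a b : ZMod 2) :
    (-1 : R) ^ (a + b).val = (-1) ^ a.val * (-1) ^ b.val := by
  rw [ZMod.val_add, ← neg_one_pow_eq_pow_mod_two, pow_add]

lemma ZMod.neg_one_pow_val_sum {ι : Type*} (s : Finset ι) (f : ι → ZMod 2) :
    (-1 : R) ^ (∑ j ∈ s, f j).val = ∏ j ∈ s, (-1 : R) ^ (f j).val := by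
  induction s using Finset.cons_induction with
  | empty => simp
  | cons a s _ ih => rw [sum_cons, ZMod.neg_one_pow_val_add, ih, prod_cons]

lemma ZMod.sum_neg_one_pow_val_mul_mul_pow_val (a : ZMod 2) (c : R) :
    ∑ x : ZMod 2, (-1 : R) ^ (a * x).val * c ^ x.val = if a = 0 then 1 + c else 1 - c := by
  rw [show (univ : Finset (ZMod 2)) = {0, 1} from rfl, sum_pair zero_ne_one]
  obtain rfl | rfl : a = 0 ∨ a = 1 := by decide +revert
  all_goals simp [ZMod.val_one, sub_eq_add_neg]

end ParityCharacter

section WeightEnumerator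

variable {ι : Type*} [Fintype ι] {R : Type*} [CommRing R]

lemma hammingNorm_eq_sum_val (v : ι → ZMod 2) : hammingNorm v = ∑ j, (v j).val := by
  rw [hammingNorm, card_filter]
  refine sum_congr rfl fun j _ => ?_
  generalize v j = a
  fin_cases a <;> rfl

lemma neg_one_pow_dotProduct_mul_pow_hammingNorm (y v : ι → ZMod 2) (c : R) :
    (-1 : R) ^ (y ⬝ᵥ v).val * c ^ hammingNorm v
      = ∏ j, (-1 : R) ^ (y j * v j).val * c ^ (v j).val := by
  rw [dotProduct, ZMod.neg_one_pow_val_sum, hammingNorm_eq_sum_val, ← prod_pow_eq_pow_sum,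
    ← prod_mul_distrib]

theorem sum_neg_one_pow_dotProduct_mul_pow_hammingNorm [DecidableEq ι] (y : ι → ZMod 2) (c : R) :
    ∑ v : ι → ZMod 2, (-1 : R) ^ (y ⬝ᵥ v).val * c ^ hammingNorm v
      = (1 + c) ^ (Fintype.card ι - hammingNorm y) * (1 - c) ^ hammingNorm y := by
  simp_rw [neg_one_pow_dotProduct_mul_pow_hammingNorm]
  rw [← Fintype.prod_sum (fun j (x : ZMod 2) => (-1 : R) ^ (y j * x).val * c ^ x.val)]
  simp_rw [ZMod.sum_neg_one_pow_val_mul_mul_pow_val]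
  rw [prod_ite, prod_const, prod_const]
  have hcard : #{j | y j = 0} = Fintype.card ι - hammingNorm y := by
    rw [← card_univ]
    exact Nat.eq_sub_of_add_eq (card_filter_add_card_filter_not _)
  rw [hcard]
  rfl

end WeightEnumerator

lemma two_mul_sum_filter_even_mul_pow {R α : Type*} [CommRing R] (s : Finset α) (f : α → ℕ)
    (g : α → R) (c : R) :
    2 * ∑ v ∈ s with Even (f v), g v * c ^ f v
      = ∑ v ∈ s, g v * c ^ f v + ∑ v ∈ s, g v * (-c) ^ f v := by
  rw [sum_filter, mul_sum, ← sum_add_distrib]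
  refine sum_congr rfl fun v _ => ?_
  rcases Nat.even_or_odd (f v) with h | h
  · rw [if_pos h, h.neg_pow]; ring
  · rw [if_neg (Nat.not_even_iff_odd.mpr h), h.neg_pow]; ring

open Complex

lemma Complex.one_add_I_mul_tan {z : ℂ} (hz : cos z ≠ 0) :
    1 + I * tan z = exp (z * I) / cos z := by
  rw [tan_eq_sin_div_cos, exp_mul_I]
  field_simp

section TangentSubstitution

variable {ι : Type*} [Fintype ι] [DecidableEq ι]

theorem sum_neg_one_pow_dotProduct_mul_I_mul_tan_pow (y : ι → ZMod 2) {z : ℂ} (hz : cos z ≠ 0) :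
    ∑ v : ι → ZMod 2, (-1 : ℂ) ^ (y ⬝ᵥ v).val * (I * tan z) ^ hammingNorm v
      = exp ((Fintype.card ι - 2 * hammingNorm y : ℂ) * z * I) / cos z ^ Fintype.card ι := by
  have hle : hammingNorm y ≤ Fintype.card ι := hammingNorm_le_card_fintype
  have hminus : 1 - I * tan z = exp (-z * I) / cos z := by
    rw [sub_eq_add_neg, ← mul_neg, ← tan_neg, one_add_I_mul_tan (by rwa [cos_neg]), cos_neg]
  rw [sum_neg_one_pow_dotProduct_mul_pow_hammingNorm, one_add_I_mul_tan hz, hminus, div_pow,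
    div_pow, div_mul_div_comm, ← pow_add, Nat.sub_add_cancel hle, ← exp_nat_mul, ← exp_nat_mul,
    ← exp_add]
  congr 2
  push_cast [Nat.cast_sub hle]
  ring

theorem sum_filter_even_neg_one_pow_dotProduct_mul_I_mul_tan_pow (y : ι → ZMod 2) {z : ℂ}
    (hz : cos z ≠ 0) :
    ∑ v : ι → ZMod 2 with Even (hammingNorm v),
        (-1 : ℂ) ^ (y ⬝ᵥ v).val * (I * tan z) ^ hammingNorm v
      = cos ((Fintype.card ι - 2 * hammingNorm y : ℂ) * z) / cos z ^ Fintype.card ι := by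
  have h := two_mul_sum_filter_even_mul_pow univ hammingNorm
    (fun v : ι → ZMod 2 => (-1 : ℂ) ^ (y ⬝ᵥ v).val) (I * tan z)
  rw [← mul_neg, ← tan_neg, sum_neg_one_pow_dotProduct_mul_I_mul_tan_pow y hz,
    sum_neg_one_pow_dotProduct_mul_I_mul_tan_pow y (by rwa [cos_neg]), cos_neg, ← add_div] at h
  apply mul_left_cancel₀ (two_ne_zero (α := ℂ))
  rw [h, mul_div_assoc', two_cos]
  ring_nf

end TangentSubstitution

theorem weight2_spc_even_sum_general (m : ℕ) (y : Fin m → ZMod 2) (l : ℕ) (hl : 3 ≤ l) :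
    ∑ v ∈ Finset.univ.filter (fun v : Fin m → ZMod 2 => Even (hammingNorm v)),
        (-1 : ℂ) ^ (y ⬝ᵥ v).val *
          (Complex.I * Real.tan (2 * Real.pi / 2 ^ l)) ^ hammingNorm v
      = (Real.cos (2 * Real.pi * ((m : ℝ) - 2 * (hammingNorm y : ℝ)) / 2 ^ l) : ℂ) *
          ((Real.cos (2 * Real.pi / 2 ^ l) : ℂ))⁻¹ ^ m := by
  set θ : ℝ := 2 * Real.pi / 2 ^ l with hθ
  have hpow : (8 : ℝ) ≤ 2 ^ l := by
    calc (8 : ℝ) = 2 ^ 3 := by norm_num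
      _ ≤ 2 ^ l := pow_le_pow_right₀ (by norm_num) hl
  have hcos : Real.cos θ ≠ 0 := by
    refine (Real.cos_pos_of_mem_Ioo ⟨?_, ?_⟩).ne'
    · linarith [show 0 < θ by positivity, Real.pi_pos]
    · rw [hθ, div_lt_iff₀ (by positivity)]
      nlinarith [Real.pi_pos]
  have h := sum_filter_even_neg_one_pow_dotProduct_mul_I_mul_tan_pow y
    (z := θ) (by exact_mod_cast hcos)
  rw [Fintype.card_fin] at h
  rw [ofReal_tan, h, ofReal_cos, ofReal_cos, div_eq_mul_inv, inv_pow]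
  congr 2
  rw [hθ]
  push_cast
  ring

/-- Let `W` be the even-weight (single-parity-check) code of length `m`,
`y ∈ F₂^m`, `l ≥ 3`, and `γ = 2π(m − 2·w_H(y))/2^l`. Then
`Σ_{v∈W} (−1)^{y·v} (i tan(2π/2^l))^{w_H(v)} = cos(γ) · (sec(2π/2^l))^m`. -/
theorem weight2_spc_even_sum (m : ℕ) (hm : 1 ≤ m) (y : Fin m → ZMod 2) (l : ℕ) (hl : 3 ≤ l) :
    ∑ v ∈ Finset.univ.filter (fun v : Fin m → ZMod 2 => Even (hammingNorm v)),
        (-1 : ℂ) ^ (y ⬝ᵥ v).val *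
          (Complex.I * Real.tan (2 * Real.pi / 2 ^ l)) ^ hammingNorm v
      = (Real.cos (2 * Real.pi * ((m : ℝ) - 2 * (hammingNorm y : ℝ)) / 2 ^ l) : ℂ) *
          ((Real.cos (2 * Real.pi / 2 ^ l) : ℂ))⁻¹ ^ m :=
  weight2_spc_even_sum_general m y l hl
end

section
/- Let m ≥ 1, let y ∈ F₂^m, let B ⊆ F₂^m be a binary linear code all of whose codewords have even Hamming weight, and set ε_v = (−1)^{y·v}. Suppose that for every integer l ≥ 3, Σ_{v∈B} ε_v (i tan(2π/2^l))^{w_H(v)} = (sec(2π/2^l))^m. Then Σ_{v∈B, w_H(v)=2} ε_v = −m/2 (as rational numbers). In particular m is even and B contains at least m/2 codewords v of Hamming weight 2 with ε_v = −1. -/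
/-!
All weights in `B` being even, the hypothesis says `P(-tan² θ) = sec^m θ` for
`P(X) = Σ_{v ∈ B} ε_v X^{w_H(v)/2}` and `θ = 2π/2^l`. Squaring and using `sec² = 1 + tan²`
gives `P² = (1 - X)^m` at infinitely many points, hence as polynomials. Since `P(0) = 1`,
this forces `m = 2d` and `P = (1 - X)^d`, and comparing coefficients of `X` gives
`Σ_{w_H(v) = 2} ε_v = -d`. Writing this sum as (number of `+1`s) − (number of `−1`s)
gives the count.
-/
open Matrix Finset Polynomial

namespace Polynomial

variable {R : Type*}

theorem coeff_one_sub_X_pow_one [CommRing R] (d : ℕ) :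
    ((1 - X : R[X]) ^ d).coeff 1 = -(d : R) := by
  have h := coeff_derivative ((1 - X : R[X]) ^ d) 0
  simp only [derivative_pow, coeff_zero_eq_eval_zero, eval_mul, eval_pow, eval_sub, eval_one,
    eval_X, derivative_sub, derivative_one, derivative_X, sub_zero, one_pow] at h
  simpa using h.symm

theorem eq_one_sub_X_pow_of_mul_self_eq [CommRing R] [IsDomain R] [CharZero R] {P : R[X]}
    {m : ℕ} (h0 : P.eval 0 = 1) (h : P * P = (1 - X) ^ m) :
    ∃ d, m = d + d ∧ P = (1 - X) ^ d := by
  have hP : P ≠ 0 := by rintro rfl; simp at h0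
  have hm : m = P.natDegree + P.natDegree := by
    have h1X : (1 - X : R[X]).natDegree = 1 := by
      rw [← neg_sub, natDegree_neg, ← C_1, natDegree_X_sub_C]
    simpa [natDegree_mul hP hP, natDegree_pow, h1X] using (congrArg natDegree h).symm
  refine ⟨_, hm, ?_⟩
  rw [hm, pow_add] at h
  refine (mul_self_eq_mul_self_iff.1 h).resolve_right fun hneg => ?_
  have := congrArg (eval 0) hneg
  simp only [h0, eval_neg, eval_pow, eval_sub, eval_one, eval_X, sub_zero, one_pow] at this
  exact one_ne_zero (CharZero.eq_neg_self_iff.1 this)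

end Polynomial

section HalfWeightEnumerator

variable {ι R : Type*} [Fintype ι] [CommSemiring R]

noncomputable def halfWeightEnumerator (S : Finset (ι → ZMod 2)) (ε : (ι → ZMod 2) → R) :
    R[X] :=
  ∑ v ∈ S, C (ε v) * X ^ (hammingNorm v / 2)

variable {S : Finset (ι → ZMod 2)} (ε : (ι → ZMod 2) → R)

theorem eval_sq_halfWeightEnumerator (hS : ∀ v ∈ S, Even (hammingNorm v)) (z : R) :
    (halfWeightEnumerator S ε).eval (z ^ 2) = ∑ v ∈ S, ε v * z ^ hammingNorm v := by
  simp only [halfWeightEnumerator, eval_finsetSum, eval_mul, eval_C, eval_pow, eval_X, ← pow_mul]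
  refine sum_congr rfl fun v hv => ?_
  rw [Nat.mul_div_cancel' (even_iff_two_dvd.1 (hS v hv))]

theorem coeff_halfWeightEnumerator (hS : ∀ v ∈ S, Even (hammingNorm v)) (k : ℕ) :
    (halfWeightEnumerator S ε).coeff k = ∑ v ∈ S with hammingNorm v = 2 * k, ε v := by
  simp only [halfWeightEnumerator, finsetSum_coeff, coeff_C_mul_X_pow, sum_filter]
  refine sum_congr rfl fun v hv => ?_
  obtain ⟨j, hj⟩ := hS v hv
  congr 1
  apply propext
  omega

end HalfWeightEnumerator

theorem sum_neg_one_pow_val_eq {α R : Type*} [Ring R] (S : Finset α) (f : α → ZMod 2) :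
    ∑ v ∈ S, (-1 : R) ^ (f v).val = #S - 2 * #{v ∈ S | f v = 1} := by
  have h : ∀ v, (-1 : R) ^ (f v).val = if f v = 1 then -1 else 1 := by
    intro v
    rcases (by decide : ∀ x : ZMod 2, x = 0 ∨ x = 1) (f v) with h | h <;> simp [h, ZMod.val_one]
  simp_rw [h]
  rw [sum_ite, sum_const, sum_const,
    ← card_filter_add_card_filter_not (s := S) (fun v => f v = 1)]
  push_cast
  simp only [nsmul_eq_mul, mul_neg, mul_one, two_mul]
  abel

section Angles

open Real

theorem two_pi_div_two_pow_mem_Ioo {l : ℕ} (hl : 3 ≤ l) :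
    2 * π / 2 ^ l ∈ Set.Ioo 0 (π / 2) := by
  have h8 : (2 : ℝ) ^ 3 ≤ 2 ^ l := pow_le_pow_right₀ one_le_two hl
  refine ⟨by positivity, ?_⟩
  rw [div_lt_iff₀ (by positivity)]
  nlinarith [pi_pos]

theorem strictAntiOn_tan_two_pi_div_two_pow :
    StrictAntiOn (fun l : ℕ => tan (2 * π / 2 ^ l)) (Set.Ici 3) := by
  intro k hk l hl hkl
  have hsub : Set.Ioo 0 (π / 2) ⊆ Set.Ioo (-(π / 2)) (π / 2) :=
    Set.Ioo_subset_Ioo_left (by linarith [pi_pos])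
  refine strictMonoOn_tan (hsub (two_pi_div_two_pow_mem_Ioo hl))
    (hsub (two_pi_div_two_pow_mem_Ioo hk)) ?_
  exact div_lt_div_of_pos_left (by positivity) (by positivity)
    (pow_lt_pow_right₀ one_lt_two hkl)

theorem injOn_tan_sq_two_pi_div_two_pow :
    Set.InjOn (fun l : ℕ => tan (2 * π / 2 ^ l) ^ 2) (Set.Ici 3) := by
  refine StrictAntiOn.injOn fun k hk l hl hkl => ?_
  have hpos := two_pi_div_two_pow_mem_Ioo hl
  exact pow_lt_pow_left₀ (strictAntiOn_tan_two_pi_div_two_pow hk hl hkl)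
    (tan_pos_of_pos_of_lt_pi_div_two hpos.1 hpos.2).le two_ne_zero

theorem mul_self_eq_one_sub_X_pow_of_eval {P : ℂ[X]} {m : ℕ}
    (h : ∀ l, 3 ≤ l → P.eval ((Complex.I * tan (2 * π / 2 ^ l)) ^ 2) =
      (cos (2 * π / 2 ^ l) : ℂ)⁻¹ ^ m) :
    P * P = (1 - X) ^ m := by
  have hpt : ∀ t : ℝ, (Complex.I * t) ^ 2 = -((t ^ 2 : ℝ) : ℂ) := by
    intro t; push_cast; rw [mul_pow, Complex.I_sq]; ring
  have hinj : Set.InjOn (fun l : ℕ => (Complex.I * tan (2 * π / 2 ^ l)) ^ 2) (Set.Ici 3) := by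
    simp only [hpt]
    exact (neg_injective.comp Complex.ofReal_injective).comp_injOn
      injOn_tan_sq_two_pi_div_two_pow
  refine eq_of_infinite_eval_eq _ _ (((Set.Ici_infinite 3).image hinj).mono ?_)
  rintro _ ⟨l, hl, rfl⟩
  have hcos : cos (2 * π / 2 ^ l) ≠ 0 := (cos_pos_of_mem_Ioo
    (Set.Ioo_subset_Ioo_left (by linarith [pi_pos]) (two_pi_div_two_pow_mem_Ioo hl))).ne'
  have hsec : (cos (2 * π / 2 ^ l))⁻¹ * (cos (2 * π / 2 ^ l))⁻¹
      = 1 + tan (2 * π / 2 ^ l) ^ 2 := by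
    rw [← mul_inv, ← sq, ← inv_one_add_tan_sq hcos, inv_inv]
  simp only [Set.mem_ofPred_eq, eval_mul, eval_pow, eval_sub, eval_one, eval_X]
  rw [h l hl, ← mul_pow, hpt, sub_neg_eq_add]
  exact_mod_cast congrArg (· ^ m) hsec

end Angles

open scoped Classical in
theorem weight_two_stabilizer_count_general (m : ℕ) (y : Fin m → ZMod 2)
    (B : Submodule (ZMod 2) (Fin m → ZMod 2))
    (hev : ∀ v ∈ B, Even (hammingNorm v))
    (hsum : ∀ l : ℕ, 3 ≤ l →
      ∑ v ∈ Finset.univ.filter (fun v : Fin m → ZMod 2 => v ∈ B),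
          (-1 : ℂ) ^ (y ⬝ᵥ v).val *
            (Complex.I * Real.tan (2 * Real.pi / 2 ^ l)) ^ hammingNorm v
        = ((Real.cos (2 * Real.pi / 2 ^ l) : ℂ))⁻¹ ^ m) :
    (∑ v ∈ Finset.univ.filter (fun v : Fin m → ZMod 2 => v ∈ B ∧ hammingNorm v = 2),
        (-1 : ℂ) ^ (y ⬝ᵥ v).val = -(m : ℂ) / 2) ∧
    Even m ∧
    m ≤ 2 * (Finset.univ.filter (fun v : Fin m → ZMod 2 =>
        v ∈ B ∧ hammingNorm v = 2 ∧ y ⬝ᵥ v = 1)).card := by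
  set S := univ.filter (fun v : Fin m → ZMod 2 => v ∈ B)
  set P := halfWeightEnumerator S fun v => (-1 : ℂ) ^ (y ⬝ᵥ v).val
  have hS : ∀ v ∈ S, Even (hammingNorm v) := fun v hv => hev v (mem_filter.1 hv).2
  have hPP : P * P = (1 - X) ^ m := mul_self_eq_one_sub_X_pow_of_eval fun l hl => by
    rw [eval_sq_halfWeightEnumerator _ hS, hsum l hl]
  have hP0 : P.eval 0 = 1 := by
    rw [← coeff_zero_eq_eval_zero, coeff_halfWeightEnumerator _ hS]
    simp [S, hammingNorm_eq_zero, filter_eq']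
  obtain ⟨d, rfl, hPd⟩ := eq_one_sub_X_pow_of_mul_self_eq hP0 hPP
  have hweight2 :
      ∑ v ∈ univ with v ∈ B ∧ hammingNorm v = 2, (-1 : ℂ) ^ (y ⬝ᵥ v).val = -d := by
    rw [← coeff_one_sub_X_pow_one, ← hPd, coeff_halfWeightEnumerator _ hS, filter_filter]
  have hcount : #{v ∈ univ | v ∈ B ∧ hammingNorm v = 2} + d
      = 2 * #{v ∈ univ | v ∈ B ∧ hammingNorm v = 2 ∧ y ⬝ᵥ v = 1} := by
    rw [sum_neg_one_pow_val_eq, filter_filter] at hweight2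
    simp only [and_assoc] at hweight2
    have : (#{v ∈ univ | v ∈ B ∧ hammingNorm v = 2} + d : ℂ)
        = 2 * #{v ∈ univ | v ∈ B ∧ hammingNorm v = 2 ∧ y ⬝ᵥ v = 1} := by
      linear_combination hweight2
    exact_mod_cast this
  refine ⟨by rw [hweight2]; push_cast; ring, ⟨d, rfl⟩, ?_⟩
  have : #{v ∈ univ | v ∈ B ∧ hammingNorm v = 2 ∧ y ⬝ᵥ v = 1}
      ≤ #{v ∈ univ | v ∈ B ∧ hammingNorm v = 2} :=
    card_le_card <| monotone_filter_right univ fun _ _ h => ⟨h.1, h.2.1⟩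
  omega

open scoped Classical in
/-- the weight-2 count in the necessity proof of Theorem 8.
Let `B ⊆ F₂^m` be a binary linear code with all codeword weights even and `ε_v = (−1)^{y·v}`.
If `Σ_{v∈B} ε_v (i tan(2π/2^l))^{w_H(v)} = (sec(2π/2^l))^m` for every `l ≥ 3`, then
`Σ_{v∈B, w_H(v)=2} ε_v = −m/2`; in particular `m` is even and `B` contains at least `m/2`
codewords of Hamming weight 2 with `ε_v = −1`. -/
theorem weight_two_stabilizer_count (m : ℕ) (hm : 1 ≤ m) (y : Fin m → ZMod 2)
    (B : Submodule (ZMod 2) (Fin m → ZMod 2))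
    (hev : ∀ v ∈ B, Even (hammingNorm v))
    (hsum : ∀ l : ℕ, 3 ≤ l →
      ∑ v ∈ Finset.univ.filter (fun v : Fin m → ZMod 2 => v ∈ B),
          (-1 : ℂ) ^ (y ⬝ᵥ v).val *
            (Complex.I * Real.tan (2 * Real.pi / 2 ^ l)) ^ hammingNorm v
        = ((Real.cos (2 * Real.pi / 2 ^ l) : ℂ))⁻¹ ^ m) :
    (∑ v ∈ Finset.univ.filter (fun v : Fin m → ZMod 2 => v ∈ B ∧ hammingNorm v = 2),
        (-1 : ℂ) ^ (y ⬝ᵥ v).val = -(m : ℂ) / 2) ∧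
    Even m ∧
    m ≤ 2 * (Finset.univ.filter (fun v : Fin m → ZMod 2 =>
        v ∈ B ∧ hammingNorm v = 2 ∧ y ⬝ᵥ v = 1)).card :=
  weight_two_stabilizer_count_general m y B hev hsum
end
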